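/- arXiv:1707.06870 — 10 statements merged into one kernel-verified Lean document; each statement's English description precedes it below -/
import Mathlib

section
/- For q an odd prime power, the product of all a ∈ F_q^× such that a+1 is a nonzero square in F_q equals (-1)^((q-1)/2) / 2, and this set has cardinality (q-3)/2. -/
/-!
For `a ≠ 0`, put `b = a + 1`. The nonzero squares of `F_q` are the `m`-th roots of unity,
`m = (q - 1) / 2`, so the elements counted are the `b - 1` with `b ∈ μ_m \ {1}`: there are
`m - 1 = (q - 3) / 2` of them. Dividing `X ^ m - 1 = ∏_{b ∈ μ_m} (X - b)` by `X - 1` and evaluating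
at `1` gives `∏_{b ≠ 1} (1 - b) = m`, and `m = -1/2` in `F_q` since `2m + 1 = q = 0`.
-/

open scoped Classical

open Finset Polynomial

namespace IsPrimitiveRoot

variable {R : Type*} [CommRing R] [IsDomain R] [DecidableEq R] {ζ : R} {m : ℕ}

theorem prod_one_sub_of_mem_nthRootsFinset_erase_one (hζ : IsPrimitiveRoot ζ m) (hm : 0 < m) :
    ∏ b ∈ (nthRootsFinset m (1 : R)).erase 1, (1 - b) = m := by
  have hfactor : (X - C 1) * ∏ b ∈ (nthRootsFinset m (1 : R)).erase 1, (X - C b) =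
      (X - C 1) * ∑ i ∈ range m, X ^ i := by
    rw [mul_prod_erase _ (fun b => X - C b) (one_mem_nthRootsFinset hm),
      ← X_pow_sub_one_eq_prod hm hζ, C_1, mul_geom_sum]
  have := congrArg (eval 1) (mul_left_cancel₀ (X_sub_C_ne_zero 1) hfactor)
  simpa [eval_prod, eval_geom_sum] using this

theorem prod_erase_one_sub_one (hζ : IsPrimitiveRoot ζ m) (hm : 0 < m) :
    ∏ b ∈ (nthRootsFinset m (1 : R)).erase 1, (b - 1) = (-1) ^ (m - 1) * m := by
  simp_rw [← neg_sub (1 : R)]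
  rw [prod_neg, hζ.prod_one_sub_of_mem_nthRootsFinset_erase_one hm,
    card_erase_of_mem (one_mem_nthRootsFinset hm), hζ.card_nthRootsFinset]

end IsPrimitiveRoot

namespace FiniteField

variable {F : Type*} [Field F] [Fintype F]

theorem exists_isPrimitiveRoot_of_dvd {m : ℕ} (hm : m ∣ Fintype.card F - 1) :
    ∃ ζ : F, IsPrimitiveRoot ζ m := by
  obtain ⟨g, hg⟩ := IsCyclic.exists_ofOrder_eq_natCard (α := Fˣ)
  have hprim : IsPrimitiveRoot (g : F) (Fintype.card F - 1) := by
    rw [IsPrimitiveRoot.coe_units_iff, ← Fintype.card_units, ← Nat.card_eq_fintype_card, ← hg]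
    exact IsPrimitiveRoot.orderOf g
  obtain ⟨k, hk⟩ := hm
  exact ⟨(g : F) ^ k, hprim.pow (Nat.sub_pos_of_lt Fintype.one_lt_card) (by rw [hk, mul_comm])⟩

theorem filter_isSquare_add_one_eq_image (hF : ringChar F ≠ 2) :
    univ.filter (fun a : F => a ≠ 0 ∧ a + 1 ≠ 0 ∧ IsSquare (a + 1)) =
      ((nthRootsFinset (Fintype.card F / 2) (1 : F)).erase 1).image (· - 1) := by
  have hpos : 0 < Fintype.card F / 2 := Nat.div_pos Fintype.one_lt_card two_pos
  ext a
  simp only [mem_filter, mem_univ, true_and, mem_image, mem_erase, mem_nthRootsFinset hpos]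
  constructor
  · rintro ⟨ha, ha1, hsq⟩
    exact ⟨a + 1, ⟨by simpa using ha, (isSquare_iff hF ha1).mp hsq⟩, add_sub_cancel_right a 1⟩
  · rintro ⟨b, ⟨hb1, hbm⟩, rfl⟩
    have hb0 : b ≠ 0 := by rintro rfl; simp [zero_pow hpos.ne'] at hbm
    rw [sub_add_cancel]
    exact ⟨sub_ne_zero.mpr hb1, hb0, (isSquare_iff hF hb0).mpr hbm⟩

theorem cast_card_div_two (hF : ringChar F ≠ 2) :
    ((Fintype.card F / 2 : ℕ) : F) = -2⁻¹ := by
  have h2 : (2 : F) ≠ 0 := Ring.two_ne_zero hF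
  have hodd : Fintype.card F % 2 = 1 := by
    have := mt even_card_iff_char_two.mpr hF
    omega
  have hcard : ((2 * (Fintype.card F / 2) + 1 : ℕ) : F) = 0 := by
    rw [← Nat.cast_card_eq_zero F]
    congr 1
    omega
  push_cast at hcard
  field_simp
  linear_combination hcard

end FiniteField

open FiniteField in
/-- The product of all `a ∈ F_q^×` with `a+1` a nonzero square is `(-1)^((q-1)/2)/2`,
and there are `(q-3)/2` such elements. -/
theorem prod_S1_plus (F : Type*) [Field F] [Fintype F] (q : ℕ)
    (hq : Fintype.card F = q) (hodd : Odd q) :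
    (∏ a ∈ Finset.univ.filter (fun a : F => a ≠ 0 ∧ a + 1 ≠ 0 ∧ IsSquare (a + 1)), a)
      = (-1 : F) ^ ((q - 1) / 2) / 2 ∧
    (Finset.univ.filter (fun a : F => a ≠ 0 ∧ a + 1 ≠ 0 ∧ IsSquare (a + 1))).card
      = (q - 3) / 2 := by
  subst hq
  have hq_mod : Fintype.card F % 2 = 1 := Nat.odd_iff.mp hodd
  have hF : ringChar F ≠ 2 := fun h => by
    have := even_card_iff_char_two.mp h
    omega
  set m := Fintype.card F / 2
  have hm_pos : 0 < m := Nat.div_pos Fintype.one_lt_card two_pos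
  obtain ⟨ζ, hζ⟩ := exists_isPrimitiveRoot_of_dvd (F := F) (m := m) ⟨2, by omega⟩
  rw [filter_isSquare_add_one_eq_image hF, prod_image sub_left_injective.injOn,
    card_image_of_injective _ sub_left_injective,
    card_erase_of_mem (one_mem_nthRootsFinset hm_pos), hζ.card_nthRootsFinset,
    hζ.prod_erase_one_sub_one hm_pos, cast_card_div_two hF,
    show (Fintype.card F - 1) / 2 = m - 1 + 1 by omega]
  exact ⟨by ring, by omega⟩
end

section
/- For q an odd prime power, the product of all a ∈ F_q^× such that a+1 is a nonsquare in F_q equals (-1)^((q-1)/2) · 2, and this set has cardinality (q-1)/2. -/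
open scoped Classical

/-!
In odd characteristic, Euler's criterion says that the nonsquares of `F` are exactly the roots
of `X ^ m + 1`, where `m = (q - 1) / 2`. This polynomial divides `X ^ q - X`, which splits with
simple roots, so `X ^ m + 1 = ∏ (X - b)` over the nonsquares `b`. Comparing degrees counts the
nonsquares, and evaluating at `1` gives `∏ (1 - b) = 2`. The elements `a` in question are the
`b - 1`, whence the sign `(-1) ^ m`.
-/

open Polynomial Finset

namespace FiniteField

variable {F : Type*} [Field F] [Fintype F]

theorem not_isSquare_iff_pow_eq_neg_one (hF : ringChar F ≠ 2) (a : F) :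
    ¬IsSquare a ↔ a ^ (Fintype.card F / 2) = -1 := by
  have hm : Fintype.card F / 2 ≠ 0 := (Nat.div_pos Fintype.one_lt_card two_pos).ne'
  rcases eq_or_ne a 0 with rfl | ha
  · simp [zero_pow hm]
  rw [isSquare_iff hF ha]
  rcases pow_dichotomy hF ha with h | h <;> simp [h, Ring.neg_one_ne_one_of_char_ne_two hF,
    (Ring.neg_one_ne_one_of_char_ne_two hF).symm]

theorem X_pow_add_one_dvd_X_pow_card_sub_X (hF : ringChar F ≠ 2) :
    (X ^ (Fintype.card F / 2) + 1 : F[X]) ∣ X ^ Fintype.card F - X := by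
  have hq : Fintype.card F = 2 * (Fintype.card F / 2) + 1 := by
    have := odd_card_of_char_ne_two hF
    omega
  refine ⟨X * (X ^ (Fintype.card F / 2) - 1), ?_⟩
  nth_rewrite 1 [hq]
  ring

theorem roots_X_pow_add_one (hF : ringChar F ≠ 2) :
    (X ^ (Fintype.card F / 2) + 1 : F[X]).roots = (univ.filter fun b : F ↦ ¬IsSquare b).val := by
  have hdvd := X_pow_add_one_dvd_X_pow_card_sub_X hF
  have hne := X_pow_card_sub_X_ne_zero F (Fintype.one_lt_card (α := F))
  have hnodup : (X ^ (Fintype.card F / 2) + 1 : F[X]).roots.Nodup := by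
    refine Multiset.nodup_of_le (roots.le_of_dvd hne hdvd) ?_
    rw [roots_X_pow_card_sub_X]
    exact univ.nodup
  rw [Multiset.Nodup.ext hnodup (Finset.nodup _)]
  intro b
  rw [mem_roots (ne_zero_of_dvd_ne_zero hne hdvd)]
  simp only [IsRoot, eval_add, eval_pow, eval_X, eval_one, mem_val, mem_filter, mem_univ, true_and,
    not_isSquare_iff_pow_eq_neg_one hF, add_eq_zero_iff_eq_neg]

theorem splits_X_pow_add_one (hF : ringChar F ≠ 2) :
    (X ^ (Fintype.card F / 2) + 1 : F[X]).Splits := by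
  have hsplits : (X ^ Fintype.card F - X : F[X]).Splits := by
    rw [splits_iff_card_roots, roots_X_pow_card_sub_X,
      X_pow_card_sub_X_natDegree_eq F Fintype.one_lt_card]
    rfl
  exact hsplits.of_dvd (X_pow_card_sub_X_ne_zero F Fintype.one_lt_card)
    (X_pow_add_one_dvd_X_pow_card_sub_X hF)

theorem card_nonsquares (hF : ringChar F ≠ 2) :
    #(univ.filter fun b : F ↦ ¬IsSquare b) = Fintype.card F / 2 := by
  rw [← Finset.card_val, ← roots_X_pow_add_one hF,
    ← (splits_X_pow_add_one hF).natDegree_eq_card_roots, ← C_1, natDegree_X_pow_add_C]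

theorem prod_one_sub_nonsquares (hF : ringChar F ≠ 2) :
    ∏ b ∈ univ.filter (fun b : F ↦ ¬IsSquare b), (1 - b) = 2 := by
  have h := (splits_X_pow_add_one hF).eval_eq_prod_roots 1
  rw [roots_X_pow_add_one hF] at h
  rwa [leadingCoeff_X_pow_add_one (Nat.div_pos Fintype.one_lt_card two_pos), one_mul,
    eval_add, eval_pow, eval_X, eval_one, one_pow, one_add_one_eq_two, eq_comm] at h

end FiniteField

theorem filter_not_isSquare_add_one_eq_map {R : Type*} [Ring R] [Fintype R] :
    univ.filter (fun a : R ↦ a ≠ 0 ∧ a + 1 ≠ 0 ∧ ¬IsSquare (a + 1)) =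
      (univ.filter fun b : R ↦ ¬IsSquare b).map (Equiv.subRight 1).toEmbedding := by
  ext a
  simp only [mem_filter, mem_univ, true_and, mem_map_equiv, Equiv.subRight_symm_apply]
  refine ⟨fun h ↦ h.2.2, fun h ↦ ⟨?_, ?_, h⟩⟩
  · rintro rfl
    exact h (by simp)
  · intro h0
    exact h (h0 ▸ IsSquare.zero)

/-- The product of all `a ∈ F_q^×` with `a+1` a nonsquare is `(-1)^((q-1)/2)·2`,
and there are `(q-1)/2` such elements. -/
theorem prod_S1_minus (F : Type*) [Field F] [Fintype F] (q : ℕ)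
    (hq : Fintype.card F = q) (hodd : Odd q) :
    (∏ a ∈ Finset.univ.filter (fun a : F => a ≠ 0 ∧ a + 1 ≠ 0 ∧ ¬ IsSquare (a + 1)), a)
      = (-1 : F) ^ ((q - 1) / 2) * 2 ∧
    (Finset.univ.filter (fun a : F => a ≠ 0 ∧ a + 1 ≠ 0 ∧ ¬ IsSquare (a + 1))).card
      = (q - 1) / 2 := by
  have hF : ringChar F ≠ 2 := by
    rw [Ne, FiniteField.even_card_iff_char_two, hq, Nat.even_iff.symm.not, Nat.not_even_iff_odd]
    exact hodd
  have hm : (q - 1) / 2 = Fintype.card F / 2 := by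
    obtain ⟨k, rfl⟩ := hodd
    omega
  rw [filter_not_isSquare_add_one_eq_map, prod_map, card_map, FiniteField.card_nonsquares hF, hm]
  refine ⟨?_, rfl⟩
  calc ∏ b ∈ univ.filter (fun b : F ↦ ¬IsSquare b), (b - 1)
      = ∏ b ∈ univ.filter (fun b : F ↦ ¬IsSquare b), -(1 - b) := by simp_rw [neg_sub]
    _ = (-1) ^ (Fintype.card F / 2) * 2 := by
      rw [prod_neg, FiniteField.card_nonsquares hF, FiniteField.prod_one_sub_nonsquares hF]
end

section
/- Let q be an odd prime power and k ∈ F_q a nonzero square. Then the product of all a ∈ F_q^× with a+k a nonzero square equals (-1)^((q-1)/2)/(2k), and the product of all a ∈ F_q^× with a+k a nonsquare equals (-1)^((q-1)/2) · 2. -/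
/-!
Write `m = (q - 1) / 2`. The nonsquares are exactly the `m` roots of `X ^ m + 1`, so
`∏_{b nonsquare} (X - b) = X ^ m + 1`; evaluating at the square `k` (where `k ^ m = 1`) gives
`∏_{b nonsquare} (b - k) = (-1) ^ m * 2`, which after the shift `a = b - k` is the second product.
By Wilson's theorem the nonzero `a` multiply to `-1`; splitting them into `a = -k` and the two
products gives `-1 = -k * P_square * (-1) ^ m * 2`, which determines the first product.
-/

open scoped Classical

open Finset Polynomial

theorem Polynomial.prod_X_sub_C_eq_of_monic_of_natDegree_le_card {R : Type*} [CommRing R]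
    [IsDomain R] {p : R[X]} (hp : p.Monic) {S : Finset R} (hS : ∀ x ∈ S, p.eval x = 0)
    (hcard : p.natDegree ≤ #S) : ∏ x ∈ S, (X - C x) = p := by
  have hroots : p.roots = S.val := roots_eq_of_natDegree_le_card_of_ne_zero hS hcard hp.ne_zero
  have hcard' : Multiset.card p.roots = p.natDegree :=
    le_antisymm (card_roots' p) (by rwa [hroots, Finset.card_val])
  rw [← prod_multiset_X_sub_C_of_monic_of_roots_card_eq hp hcard', hroots,
    Finset.prod_eq_multiset_prod]

theorem Polynomial.card_nthRootsFinset_le {R : Type*} [CommRing R] [IsDomain R] (n : ℕ) (a : R) :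
    #(nthRootsFinset n a) ≤ n := by
  rw [nthRootsFinset_def]
  exact (Multiset.toFinset_card_le _).trans (card_nthRoots n a)

namespace Finset

variable {R : Type*} [CommRing R] [Fintype R]

theorem prod_filter_add_right_eq (p : R → Prop) [DecidablePred p] (k : R) :
    ∏ a ∈ univ.filter (fun a => p (a + k)), a = ∏ b ∈ univ.filter p, (b - k) := by
  rw [prod_filter, prod_filter]
  exact Fintype.prod_equiv (Equiv.addRight k) _ _ fun a => by simp

theorem prod_filter_ne_zero_eq_neg_mul (p : R → Prop) [DecidablePred p] {k : R} (hk : k ≠ 0) :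
    ∏ a ∈ univ.filter (fun a : R => a ≠ 0), a =
      -k * ((∏ a ∈ univ.filter (fun a => a ≠ 0 ∧ a + k ≠ 0 ∧ p (a + k)), a) *
        ∏ a ∈ univ.filter (fun a => a ≠ 0 ∧ a + k ≠ 0 ∧ ¬p (a + k)), a) := by
  have hinsert : univ.filter (fun a : R => a ≠ 0) =
      insert (-k) (univ.filter fun a => a ≠ 0 ∧ a + k ≠ 0) := by
    ext a
    simp only [mem_filter, mem_univ, true_and, mem_insert]
    constructor
    · intro ha
      by_cases hak : a + k = 0
      · exact Or.inl (eq_neg_of_add_eq_zero_left hak)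
      · exact Or.inr ⟨ha, hak⟩
    · rintro (rfl | ⟨ha, -⟩)
      exacts [neg_ne_zero.2 hk, ha]
  rw [hinsert, prod_insert (by simp), ← prod_filter_mul_prod_filter_not _ (fun a => p (a + k)),
    filter_filter, filter_filter]
  simp only [and_assoc]

end Finset

namespace FiniteField

variable {F : Type*} [Field F] [Fintype F]

theorem card_div_two_pos : 0 < Fintype.card F / 2 := by
  have := Fintype.one_lt_card (α := F)
  omega

theorem prod_filter_ne_zero_eq_neg_one : ∏ a ∈ univ.filter (fun a : F => a ≠ 0), a = -1 := by
  rw [prod_subtype _ (p := fun a : F => a ≠ 0) (fun a => by simp),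
    ← Fintype.prod_equiv unitsEquivNeZero (fun u => (u : F)) _ fun _ => rfl, ← Units.coe_prod,
    prod_univ_units_id_eq_neg_one, Units.val_neg, Units.val_one]

theorem nthRootsFinset_neg_one_eq (hF : ringChar F ≠ 2) :
    nthRootsFinset (Fintype.card F / 2) (-1 : F) =
      univ.filter (fun t => t ≠ 0 ∧ ¬IsSquare t) := by
  ext t
  rw [mem_filter, and_iff_right (mem_univ t), mem_nthRootsFinset card_div_two_pos]
  constructor
  · intro h
    have ht : t ≠ 0 := by
      rintro rfl
      rw [zero_pow card_div_two_pos.ne'] at h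
      exact zero_ne_one (neg_eq_zero.1 h.symm).symm
    refine ⟨ht, fun hsq => ?_⟩
    rw [isSquare_iff hF ht, h] at hsq
    exact Ring.neg_one_ne_one_of_char_ne_two hF hsq
  · rintro ⟨ht, hsq⟩
    exact (pow_dichotomy hF ht).resolve_left (mt (isSquare_iff hF ht).2 hsq)

-- `t ^ m = 1` and `t ^ m = -1` each have at most `m` solutions and together they have `2 m`.
theorem card_nthRootsFinset_neg_one (hF : ringChar F ≠ 2) :
    #(nthRootsFinset (Fintype.card F / 2) (-1 : F)) = Fintype.card F / 2 := by
  set m := Fintype.card F / 2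
  have hm : 0 < m := card_div_two_pos
  have hdisj : Disjoint (nthRootsFinset m (1 : F)) (nthRootsFinset m (-1)) := by
    rw [Finset.disjoint_left]
    intro t h1 h2
    rw [mem_nthRootsFinset hm] at h1 h2
    exact Ring.neg_one_ne_one_of_char_ne_two hF (h2.symm.trans h1)
  have hunion : nthRootsFinset m (1 : F) ∪ nthRootsFinset m (-1) = univ.erase 0 := by
    ext t
    simp only [mem_union, mem_nthRootsFinset hm, mem_erase, mem_univ, and_true]
    refine ⟨?_, pow_dichotomy hF⟩
    rintro (h | h) rfl <;> simp [zero_pow hm.ne'] at h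
  have hsum := card_union_of_disjoint hdisj
  rw [hunion, card_erase_of_mem (mem_univ 0), card_univ] at hsum
  have := odd_card_of_char_ne_two hF
  have := card_nthRootsFinset_le m (1 : F)
  have := card_nthRootsFinset_le m (-1 : F)
  omega

theorem prod_sub_nthRootsFinset_neg_one (hF : ringChar F ≠ 2) (x : F) :
    ∏ t ∈ nthRootsFinset (Fintype.card F / 2) (-1 : F), (x - t) =
      x ^ (Fintype.card F / 2) + 1 := by
  set m := Fintype.card F / 2
  have hmonic : (X ^ m - C (-1 : F)).Monic := monic_X_pow_sub_C _ card_div_two_pos.ne'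
  have hprod : ∏ t ∈ nthRootsFinset m (-1 : F), (X - C t) = X ^ m - C (-1) :=
    prod_X_sub_C_eq_of_monic_of_natDegree_le_card hmonic
      (fun t ht => by
        simpa [← eq_neg_iff_add_eq_zero] using (mem_nthRootsFinset card_div_two_pos _).1 ht)
      (by rw [natDegree_X_pow_sub_C, card_nthRootsFinset_neg_one hF])
  simpa [eval_prod] using congrArg (eval x) hprod

theorem prod_filter_add_not_isSquare (hF : ringChar F ≠ 2) (k : F) :
    ∏ a ∈ univ.filter (fun a => a + k ≠ 0 ∧ ¬IsSquare (a + k)), a =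
      (-1) ^ (Fintype.card F / 2) * (k ^ (Fintype.card F / 2) + 1) := by
  calc ∏ a ∈ univ.filter (fun a => a + k ≠ 0 ∧ ¬IsSquare (a + k)), a
      = ∏ b ∈ univ.filter (fun b => b ≠ 0 ∧ ¬IsSquare b), (b - k) :=
        prod_filter_add_right_eq (fun b => b ≠ 0 ∧ ¬IsSquare b) k
    _ = ∏ b ∈ nthRootsFinset (Fintype.card F / 2) (-1 : F), (-1) * (k - b) := by
        rw [← nthRootsFinset_neg_one_eq hF]
        exact prod_congr rfl fun b _ => by ring
    _ = (-1) ^ (Fintype.card F / 2) * (k ^ (Fintype.card F / 2) + 1) := by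
      rw [prod_mul_distrib, prod_const, card_nthRootsFinset_neg_one hF,
        prod_sub_nthRootsFinset_neg_one hF]

end FiniteField

/-- For `k` a nonzero square in `F_q`: products over `a` with `a+k` a nonzero square,
resp. a nonsquare. -/
theorem prod_Sk_square (F : Type*) [Field F] [Fintype F] (q : ℕ)
    (hq : Fintype.card F = q) (hodd : Odd q) (k : F) (hk0 : k ≠ 0) (hk : IsSquare k) :
    (∏ a ∈ Finset.univ.filter (fun a : F => a ≠ 0 ∧ a + k ≠ 0 ∧ IsSquare (a + k)), a)
      = (-1 : F) ^ ((q - 1) / 2) / (2 * k) ∧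
    (∏ a ∈ Finset.univ.filter (fun a : F => a ≠ 0 ∧ a + k ≠ 0 ∧ ¬ IsSquare (a + k)), a)
      = (-1 : F) ^ ((q - 1) / 2) * 2 := by
  have hF : ringChar F ≠ 2 := fun h =>
    Nat.not_even_iff_odd.2 hodd (hq ▸ Nat.even_iff.2 (FiniteField.even_card_of_char_two h))
  rw [show (q - 1) / 2 = Fintype.card F / 2 by obtain ⟨r, rfl⟩ := hodd; omega]
  set m := Fintype.card F / 2
  have hkm : k ^ m = 1 := (FiniteField.isSquare_iff hF hk0).1 hk
  have hPN : ∏ a ∈ univ.filter (fun a : F => a ≠ 0 ∧ a + k ≠ 0 ∧ ¬IsSquare (a + k)), a =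
      (-1) ^ m * 2 := by
    have hshift := FiniteField.prod_filter_add_not_isSquare hF k
    rw [hkm, one_add_one_eq_two] at hshift
    rw [← hshift]
    refine prod_congr (filter_congr fun a _ => and_iff_right_of_imp ?_) fun _ _ => rfl
    rintro ⟨-, hns⟩ rfl
    exact hns (by rwa [zero_add])
  have hsplit := prod_filter_ne_zero_eq_neg_mul (fun b => IsSquare b) hk0
  rw [FiniteField.prod_filter_ne_zero_eq_neg_one, hPN] at hsplit
  refine ⟨?_, hPN⟩
  rw [eq_div_iff (mul_ne_zero (Ring.two_ne_zero hF) hk0)]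
  have hsq : ((-1 : F) ^ m) ^ 2 = 1 := by rw [← pow_mul, mul_comm, pow_mul, neg_one_sq, one_pow]
  linear_combination (-1) ^ m * hsplit -
    2 * k * (∏ a ∈ univ.filter (fun a : F => a ≠ 0 ∧ a + k ≠ 0 ∧ IsSquare (a + k)), a) * hsq
end

section
/- Let q be an odd prime power and k ∈ F_q a nonsquare. Then the product of all a ∈ F_q^× with a+k a nonzero square equals (-1)^((q+1)/2) · 2, and the product of all a ∈ F_q^× with a+k a nonsquare equals (-1)^((q+1)/2)/(2k). -/
open scoped Classical

open Polynomial Finset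

private lemma prod_X_sub_C_eq_aux {F : Type*} [Field F] (s : Finset F) (p : F[X])
    (hm : p.Monic) (hdeg : p.natDegree = s.card) (hroot : ∀ b ∈ s, p.eval b = 0) :
    (∏ b ∈ s, (X - C b)) = p := by
  have hp0 : p ≠ 0 := hm.ne_zero
  have hsub : s.val ⊆ p.roots := by
    intro b hb
    rw [Polynomial.mem_roots hp0]
    exact hroot b hb
  have hdvd : (∏ b ∈ s, (X - C b)) ∣ p := by
    have := (Multiset.prod_X_sub_C_dvd_iff_le_roots hp0 s.val).2
      (Finset.val_le_iff_val_subset.2 hsub)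
    rwa [← Finset.prod_eq_multiset_prod] at this
  have hmonic : (∏ b ∈ s, (X - C b)).Monic :=
    monic_prod_of_monic _ _ fun b _ => monic_X_sub_C b
  have hdeg' : (∏ b ∈ s, (X - C b)).natDegree = s.card := by
    rw [Polynomial.natDegree_prod _ _ fun b _ => X_sub_C_ne_zero b]
    simp
  exact (Polynomial.eq_of_monic_of_dvd_of_natDegree_le hmonic hm hdvd
    (by rw [hdeg, hdeg'])).symm

/-- For `k` a nonsquare in `F_q`: products over `a` with `a+k` a nonzero square,
resp. a nonsquare. -/
theorem prod_Sk_nonsquare (F : Type*) [Field F] [Fintype F] (q : ℕ)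
    (hq : Fintype.card F = q) (hodd : Odd q) (k : F) (hk0 : k ≠ 0) (hk : ¬ IsSquare k) :
    (∏ a ∈ Finset.univ.filter (fun a : F => a ≠ 0 ∧ a + k ≠ 0 ∧ IsSquare (a + k)), a)
      = (-1 : F) ^ ((q + 1) / 2) * 2 ∧
    (∏ a ∈ Finset.univ.filter (fun a : F => a ≠ 0 ∧ a + k ≠ 0 ∧ ¬ IsSquare (a + k)), a)
      = (-1 : F) ^ ((q + 1) / 2) / (2 * k) := by
  classical
  obtain ⟨t, ht⟩ := hodd
  have hC : ringChar F ≠ 2 := by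
    intro h
    have := FiniteField.even_card_iff_char_two.mp h
    rw [hq] at this
    omega
  have hq2 : 2 ≤ q := hq ▸ Fintype.one_lt_card
  set m := q / 2 with hm
  have hqm : q = 2 * m + 1 := by omega
  have hm1 : 1 ≤ m := by omega
  have hsq : ∀ a : F, a ≠ 0 → (IsSquare a ↔ a ^ m = 1) := by
    intro a ha
    rw [hm, ← hq]
    exact FiniteField.isSquare_iff hC ha
  have hdich : ∀ a : F, a ≠ 0 → a ^ m = 1 ∨ a ^ m = -1 := by
    intro a ha
    rw [hm, ← hq]
    exact FiniteField.pow_dichotomy hC ha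
  have hkm : k ^ m = -1 := by
    rcases hdich k hk0 with h | h
    · exact absurd ((hsq k hk0).2 h) hk
    · exact h
  set S : Finset F := Finset.univ.filter (fun b : F => b ≠ 0 ∧ IsSquare b) with hS
  set S' : Finset F := Finset.univ.filter (fun b : F => b ≠ 0 ∧ ¬ IsSquare b) with hS'
  -- cardinalities
  have hcard_le : S.card ≤ m ∧ S'.card ≤ m := by
    constructor
    · have : S.val ⊆ (X ^ m - C (1 : F)).roots := by
        intro b hb
        rw [Finset.mem_val, hS, Finset.mem_filter] at hb
        rw [Polynomial.mem_roots (X_pow_sub_C_ne_zero (by omega) _)]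
        simp [Polynomial.IsRoot, (hsq b hb.2.1).1 hb.2.2]
      simpa only [natDegree_X_pow_sub_C] using Polynomial.card_le_degree_of_subset_roots this
    · have : S'.val ⊆ (X ^ m - C (-1 : F)).roots := by
        intro b hb
        rw [Finset.mem_val, hS', Finset.mem_filter] at hb
        rw [Polynomial.mem_roots (X_pow_sub_C_ne_zero (by omega) _)]
        have : b ^ m = -1 := by
          rcases hdich b hb.2.1 with h | h
          · exact absurd ((hsq b hb.2.1).2 h) hb.2.2
          · exact h
        simp [Polynomial.IsRoot, this]
      simpa only [natDegree_X_pow_sub_C] using Polynomial.card_le_degree_of_subset_roots this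
  have hunion : S ∪ S' = Finset.univ.filter (fun b : F => b ≠ 0) := by
    ext b
    simp only [hS, hS', Finset.mem_union, Finset.mem_filter, Finset.mem_univ, true_and]
    tauto
  have hdisj : Disjoint S S' := by
    rw [Finset.disjoint_left]
    intro b hb hb'
    rw [hS, Finset.mem_filter] at hb
    rw [hS', Finset.mem_filter] at hb'
    exact hb'.2.2 hb.2.2
  have hcard_sum : S.card + S'.card = q - 1 := by
    rw [← Finset.card_union_of_disjoint hdisj, hunion]
    rw [Finset.filter_ne', Finset.card_erase_of_mem (Finset.mem_univ _), Finset.card_univ, hq]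
  have hScard : S.card = m := by omega
  have hS'card : S'.card = m := by omega
  -- polynomial factorizations
  have hp1 : (∏ b ∈ S, (X - C b)) = X ^ m - C (1 : F) := by
    apply prod_X_sub_C_eq_aux
    · exact monic_X_pow_sub_C _ (by omega)
    · rw [natDegree_X_pow_sub_C, hScard]
    · intro b hb
      rw [hS, Finset.mem_filter] at hb
      simp [(hsq b hb.2.1).1 hb.2.2]
  have hp2 : (∏ b ∈ S', (X - C b)) = X ^ m - C (-1 : F) := by
    apply prod_X_sub_C_eq_aux
    · exact monic_X_pow_sub_C _ (by omega)
    · rw [natDegree_X_pow_sub_C, hS'card]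
    · intro b hb
      rw [hS', Finset.mem_filter] at hb
      have : b ^ m = -1 := by
        rcases hdich b hb.2.1 with h | h
        · exact absurd ((hsq b hb.2.1).2 h) hb.2.2
        · exact h
      simp [this]
  have hq12 : (q + 1) / 2 = m + 1 := by omega
  -- (m : F) = -1/2
  have hqF : ((q : ℕ) : F) = 0 := by
    rw [← hq]; exact FiniteField.cast_card_eq_zero F
  have h2ne : (2 : F) ≠ 0 := Ring.two_ne_zero hC
  have h2m : (2 : F) * (m : F) = -1 := by
    have : ((2 * m : ℕ) : F) = ((q : ℕ) : F) - 1 := by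
      rw [hqm]; push_cast; ring
    rw [hqF] at this
    push_cast at this
    linear_combination this
  -- first product
  have e1 : (∏ a ∈ Finset.univ.filter
      (fun a : F => a ≠ 0 ∧ a + k ≠ 0 ∧ IsSquare (a + k)), a) = ∏ b ∈ S, (b - k) := by
    apply Finset.prod_nbij' (fun a => a + k) (fun b => b - k)
    · intro a ha
      rw [Finset.mem_filter] at ha
      rw [hS, Finset.mem_filter]
      exact ⟨Finset.mem_univ _, ha.2.2.1, ha.2.2.2⟩
    · intro b hb
      rw [hS, Finset.mem_filter] at hb
      rw [Finset.mem_filter]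
      refine ⟨Finset.mem_univ _, ?_, ?_, ?_⟩
      · intro h
        apply hk
        have : b = k := by linear_combination h
        rw [← this]; exact hb.2.2
      · simpa using hb.2.1
      · simpa using hb.2.2
    · intro a _; ring
    · intro b _; ring
    · intro b _; ring
  have ev1 : (∏ b ∈ S, (k - b)) = -2 := by
    have := congrArg (Polynomial.eval k) hp1
    rw [Polynomial.eval_prod] at this
    simp only [Polynomial.eval_sub, Polynomial.eval_X, Polynomial.eval_C,
      Polynomial.eval_pow] at this
    rw [this, hkm]; ring
  have goal1 : (∏ b ∈ S, (b - k)) = (-1 : F) ^ ((q + 1) / 2) * 2 := by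
    have : (∏ b ∈ S, (b - k)) = (-1 : F) ^ S.card * ∏ b ∈ S, (k - b) := by
      rw [← Finset.prod_const, ← Finset.prod_mul_distrib]
      apply Finset.prod_congr rfl
      intro b _; ring
    rw [this, ev1, hScard, hq12, pow_succ]
    ring
  -- second product
  have hkS' : k ∈ S' := by
    rw [hS', Finset.mem_filter]
    exact ⟨Finset.mem_univ _, hk0, hk⟩
  set Q : F[X] := ∏ b ∈ S'.erase k, (X - C b) with hQ
  have hfac : (X - C k) * Q = X ^ m - C (-1 : F) := by
    rw [hQ, ← hp2]
    exact Finset.mul_prod_erase S' (fun b => X - C b) hkS'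
  have hder := congrArg (fun p : F[X] => Polynomial.eval k (Polynomial.derivative p)) hfac
  simp only [Polynomial.derivative_mul, Polynomial.derivative_sub, Polynomial.derivative_X,
    Polynomial.derivative_C, Polynomial.derivative_X_pow, Polynomial.eval_add,
    Polynomial.eval_mul, Polynomial.eval_sub, Polynomial.eval_X, Polynomial.eval_C,
    Polynomial.eval_pow, sub_self, zero_mul, one_mul, mul_zero, add_zero, sub_zero,
    zero_add] at hder
  -- hder : Q.eval k = (m : F) * k ^ (m - 1)
  have evQ : (∏ b ∈ S'.erase k, (k - b)) = (m : F) * k ^ (m - 1) := by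
    rw [← hder, hQ, Polynomial.eval_prod]
    simp
  have e2 : (∏ a ∈ Finset.univ.filter
      (fun a : F => a ≠ 0 ∧ a + k ≠ 0 ∧ ¬ IsSquare (a + k)), a)
      = ∏ b ∈ S'.erase k, (b - k) := by
    apply Finset.prod_nbij' (fun a => a + k) (fun b => b - k)
    · intro a ha
      rw [Finset.mem_filter] at ha
      rw [Finset.mem_erase, hS', Finset.mem_filter]
      refine ⟨?_, Finset.mem_univ _, ha.2.2.1, ha.2.2.2⟩
      intro h
      exact ha.2.1 (by linear_combination h)
    · intro b hb
      rw [Finset.mem_erase, hS', Finset.mem_filter] at hb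
      rw [Finset.mem_filter]
      refine ⟨Finset.mem_univ _, ?_, ?_, ?_⟩
      · intro h
        exact hb.1 (by linear_combination h)
      · simpa using hb.2.2.1
      · simpa using hb.2.2.2
    · intro a _; ring
    · intro b _; ring
    · intro b _; ring
  have hcard_erase : (S'.erase k).card = m - 1 := by
    rw [Finset.card_erase_of_mem hkS', hS'card]
  have hkm1 : k ^ (m - 1) = -k⁻¹ := by
    have h1 : k ^ (m - 1) * k = k ^ m := by
      rw [← pow_succ]
      congr 1
      omega
    rw [hkm] at h1
    have h2 : k * k⁻¹ = 1 := mul_inv_cancel₀ hk0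
    linear_combination k⁻¹ * h1 - k ^ (m - 1) * h2
  have goal2 : (∏ b ∈ S'.erase k, (b - k)) = (-1 : F) ^ ((q + 1) / 2) / (2 * k) := by
    have hstep : (∏ b ∈ S'.erase k, (b - k))
        = (-1 : F) ^ (m - 1) * ∏ b ∈ S'.erase k, (k - b) := by
      rw [← hcard_erase, ← Finset.prod_const, ← Finset.prod_mul_distrib]
      apply Finset.prod_congr rfl
      intro b _; ring
    rw [hstep, evQ, hkm1, hq12]
    have hpow : (-1 : F) ^ (m - 1) = (-1 : F) ^ (m + 1) := by
      have h : m - 1 + 2 = m + 1 := by omega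
      rw [← h, pow_add]
      norm_num
    rw [hpow]
    have hmF : (m : F) = -1 / 2 := by
      rw [eq_div_iff h2ne]
      linear_combination h2m
    rw [hmF]
    field_simp
  exact ⟨e1.trans goal1, e2.trans goal2⟩
end

section
/- Let q be an odd prime power. The number of a ∈ F_q with both a and a+1 nonzero squares is ⌊(q-3)/4⌋; the number with a a nonzero square and a+1 a nonsquare is ⌊(q+1)/4⌋; the number with a a nonsquare and a+1 a nonzero square is ⌊(q-1)/4⌋; and the number with both a and a+1 nonsquares is ⌊(q-1)/4⌋. -/
/-!
Let `χ` be the quadratic character of `F` and `ε, δ ∈ {±1}`. For `a ∉ {0, -1}` the product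
`(1 + ε χ(a)) (1 + δ χ(a + 1))` is `4` if `χ(a) = ε` and `χ(a + 1) = δ`, and `0` otherwise, while
the points `a = 0` and `a = -1` contribute `1 + δ` and `1 + ε χ(-1)`. Summing over `F`, the linear
terms vanish and the cross term is a Jacobi sum equal to `-1`, so four times the count is
`q - εδ - (1 + δ) - (1 + ε χ(-1))`; finally `χ(-1) = 1` exactly when `q ≡ 1 mod 4`.
-/

open scoped Classical

open Finset

section QuadraticChar

variable {F : Type*} [Field F] [Fintype F]

theorem ne_zero_and_isSquare_iff_quadraticChar_eq_one {x : F} :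
    (x ≠ 0 ∧ IsSquare x) ↔ quadraticChar F x = 1 := by
  refine ⟨fun ⟨hx, hsq⟩ ↦ (quadraticChar_one_iff_isSquare hx).mpr hsq, fun h ↦ ?_⟩
  have hx : x ≠ 0 := fun hx ↦ by simp [hx] at h
  exact ⟨hx, (quadraticChar_one_iff_isSquare hx).mp h⟩

theorem ne_zero_and_not_isSquare_iff_quadraticChar_eq_neg_one {x : F} :
    (x ≠ 0 ∧ ¬IsSquare x) ↔ quadraticChar F x = -1 := by
  rw [quadraticChar_neg_one_iff_not_isSquare, and_iff_right_iff_imp]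
  rintro hsq rfl
  exact hsq .zero

theorem sum_quadraticChar_add (hF : ringChar F ≠ 2) (c : F) :
    ∑ a : F, quadraticChar F (a + c) = 0 :=
  (Equiv.sum_comp (Equiv.addRight c) (quadraticChar F)).trans (quadraticChar_sum_zero hF)

theorem sum_quadraticChar_mul_quadraticChar_add_one (hF : ringChar F ≠ 2) :
    ∑ a : F, quadraticChar F a * quadraticChar F (a + 1) = -1 := by
  set χ := quadraticChar F
  have hJ : ∑ a : F, χ a * χ (1 - a) = -χ (-1) := by
    simpa only [jacobiSum, (quadraticChar_isQuadratic F).inv] using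
      jacobiSum_nontrivial_inv (quadraticChar_ne_one hF)
  calc ∑ a : F, χ a * χ (a + 1)
      = ∑ a : F, χ (-a) * χ (-a + 1) := (Equiv.sum_comp (Equiv.neg F) _).symm
    _ = χ (-1) * ∑ a : F, χ a * χ (1 - a) := by
        rw [mul_sum]
        refine sum_congr rfl fun a _ ↦ ?_
        rw [neg_eq_neg_one_mul a, map_mul, neg_one_mul, neg_add_eq_sub, mul_assoc]
    _ = -1 := by rw [hJ, mul_neg, ← map_mul, neg_one_mul, neg_neg, map_one]

theorem one_add_mul_mul_one_add_mul_eq_ite {ε δ x y : ℤ} (hε : ε = 1 ∨ ε = -1)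
    (hδ : δ = 1 ∨ δ = -1) (hx : x = 1 ∨ x = -1) (hy : y = 1 ∨ y = -1) :
    (1 + ε * x) * (1 + δ * y) = if x = ε ∧ y = δ then 4 else 0 := by
  rcases hε with rfl | rfl <;> rcases hδ with rfl | rfl <;> rcases hx with rfl | rfl <;>
    rcases hy with rfl | rfl <;> decide

variable {ε δ : ℤ}

theorem one_add_mul_quadraticChar_mul_eq_ite (hε : ε = 1 ∨ ε = -1) (hδ : δ = 1 ∨ δ = -1)
    (a : F) :
    (1 + ε * quadraticChar F a) * (1 + δ * quadraticChar F (a + 1)) =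
      (if quadraticChar F a = ε ∧ quadraticChar F (a + 1) = δ then 4 else 0) +
        (if a = 0 then 1 + δ else 0) + (if a = -1 then 1 + ε * quadraticChar F (-1) else 0) := by
  have hε0 : ε ≠ 0 := by rintro rfl; simp at hε
  have hδ0 : δ ≠ 0 := by rintro rfl; simp at hδ
  by_cases ha : a = 0
  · subst ha
    simp [hε0.symm, (neg_ne_zero.mpr one_ne_zero).symm]
  by_cases ha' : a = -1
  · subst ha'
    simp [hδ0.symm]
  have ha1 : a + 1 ≠ 0 := fun h ↦ ha' (eq_neg_of_add_eq_zero_left h)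
  rw [if_neg ha, if_neg ha', add_zero, add_zero]
  exact one_add_mul_mul_one_add_mul_eq_ite hε hδ (quadraticChar_dichotomy ha)
    (quadraticChar_dichotomy ha1)

theorem four_mul_card_quadraticChar_eq_and_add_one_eq (hF : ringChar F ≠ 2)
    (hε : ε = 1 ∨ ε = -1) (hδ : δ = 1 ∨ δ = -1) :
    4 * (#{a : F | quadraticChar F a = ε ∧ quadraticChar F (a + 1) = δ} : ℤ) =
      Fintype.card F - ε * δ - (1 + δ) - (1 + ε * quadraticChar F (-1)) := by
  have hsum : ∑ a : F, (1 + ε * quadraticChar F a) * (1 + δ * quadraticChar F (a + 1)) =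
      Fintype.card F - ε * δ := by
    have hexpand : ∀ a : F, (1 + ε * quadraticChar F a) * (1 + δ * quadraticChar F (a + 1)) =
        1 + ε * quadraticChar F a + δ * quadraticChar F (a + 1) +
          ε * δ * (quadraticChar F a * quadraticChar F (a + 1)) := fun a ↦ by ring
    simp only [hexpand, sum_add_distrib, ← mul_sum, quadraticChar_sum_zero hF,
      sum_quadraticChar_add hF, sum_quadraticChar_mul_quadraticChar_add_one hF, sum_const,
      card_univ, nsmul_eq_mul, mul_one]
    ring
  simp only [one_add_mul_quadraticChar_mul_eq_ite hε hδ, sum_add_distrib, sum_ite_eq',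
    mem_univ, if_true, sum_ite, sum_const_zero, add_zero, sum_const, nsmul_eq_mul] at hsum
  linear_combination hsum

end QuadraticChar

/-- Counting `a ∈ F_q` according to the square classes of `a` and `a+1`. -/
theorem card_square_pairs (F : Type*) [Field F] [Fintype F] (q : ℕ)
    (hq : Fintype.card F = q) (hodd : Odd q) :
    (Finset.univ.filter (fun a : F =>
        (a ≠ 0 ∧ IsSquare a) ∧ (a + 1 ≠ 0 ∧ IsSquare (a + 1)))).card = (q - 3) / 4 ∧
    (Finset.univ.filter (fun a : F =>
        (a ≠ 0 ∧ IsSquare a) ∧ (a + 1 ≠ 0 ∧ ¬ IsSquare (a + 1)))).card = (q + 1) / 4 ∧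
    (Finset.univ.filter (fun a : F =>
        (a ≠ 0 ∧ ¬ IsSquare a) ∧ (a + 1 ≠ 0 ∧ IsSquare (a + 1)))).card = (q - 1) / 4 ∧
    (Finset.univ.filter (fun a : F =>
        (a ≠ 0 ∧ ¬ IsSquare a) ∧ (a + 1 ≠ 0 ∧ ¬ IsSquare (a + 1)))).card = (q - 1) / 4 := by
  have hF : ringChar F ≠ 2 := by
    rwa [Ne, FiniteField.even_card_iff_char_two, hq, ← Nat.even_iff, Nat.not_even_iff_odd]
  simp only [ne_zero_and_isSquare_iff_quadraticChar_eq_one,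
    ne_zero_and_not_isSquare_iff_quadraticChar_eq_neg_one]
  have h₁ := four_mul_card_quadraticChar_eq_and_add_one_eq (F := F) hF (.inl rfl) (.inl rfl)
  have h₂ := four_mul_card_quadraticChar_eq_and_add_one_eq (F := F) hF (.inl rfl) (.inr rfl)
  have h₃ := four_mul_card_quadraticChar_eq_and_add_one_eq (F := F) hF (.inr rfl) (.inl rfl)
  have h₄ := four_mul_card_quadraticChar_eq_and_add_one_eq (F := F) hF (.inr rfl) (.inr rfl)
  simp only [quadraticChar_neg_one hF, hq, ZMod.χ₄_nat_eq_if_mod_four] at h₁ h₂ h₃ h₄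
  obtain ⟨k, rfl⟩ := hodd
  split_ifs at h₁ h₂ h₃ h₄ <;> omega
end

section
/- Let q be an odd prime power and a, b, c ∈ F_q with ab ≠ 0 and a² + b² = c². Then (c+a)(c+b) ≠ 0 and the Legendre symbol of c+a equals the Legendre symbol of 2 times the Legendre symbol of c+b. Moreover the Legendre symbols of c+a and c-a are equal, and those of c+b and c-b are equal. -/
/-- If `a² + b² = c²` with `ab ≠ 0`, then `(c+a)(c+b) ≠ 0`,
`χ(c+a) = χ(2)·χ(c+b)`, `χ(c+a) = χ(c-a)`, and `χ(c+b) = χ(c-b)`,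
where `χ` is the quadratic character. -/
theorem legendre_pythagorean (F : Type*) [Field F] [Fintype F] [DecidableEq F] (q : ℕ)
    (hq : Fintype.card F = q) (hodd : Odd q) (a b c : F) (hab : a * b ≠ 0)
    (h : a ^ 2 + b ^ 2 = c ^ 2) :
    (c + a) * (c + b) ≠ 0 ∧
    quadraticChar F (c + a) = quadraticChar F 2 * quadraticChar F (c + b) ∧
    quadraticChar F (c + a) = quadraticChar F (c - a) ∧
    quadraticChar F (c + b) = quadraticChar F (c - b) := by
  have ha : a ≠ 0 := left_ne_zero_of_mul hab
  have hb : b ≠ 0 := right_ne_zero_of_mul hab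
  have hchar : ringChar F ≠ 2 := by
    intro h2
    have := FiniteField.even_card_of_char_two h2
    rw [hq] at this
    rw [Nat.odd_iff] at hodd
    omega
  have h2 : (2 : F) ≠ 0 := Ring.two_ne_zero hchar
  have hca : c + a ≠ 0 := by
    intro h0
    apply hb
    have : b ^ 2 = (c + a) * (c - a) := by ring_nf; linear_combination h
    rw [h0, zero_mul] at this
    exact pow_eq_zero_iff (n := 2) (by norm_num) |>.mp this
  have hcma : c - a ≠ 0 := by
    intro h0
    apply hb
    have : b ^ 2 = (c + a) * (c - a) := by ring_nf; linear_combination h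
    rw [h0, mul_zero] at this
    exact pow_eq_zero_iff (n := 2) (by norm_num) |>.mp this
  have hcb : c + b ≠ 0 := by
    intro h0
    apply ha
    have : a ^ 2 = (c + b) * (c - b) := by ring_nf; linear_combination h
    rw [h0, zero_mul] at this
    exact pow_eq_zero_iff (n := 2) (by norm_num) |>.mp this
  have hcmb : c - b ≠ 0 := by
    intro h0
    apply ha
    have : a ^ 2 = (c + b) * (c - b) := by ring_nf; linear_combination h
    rw [h0, mul_zero] at this
    exact pow_eq_zero_iff (n := 2) (by norm_num) |>.mp this
  have habc : a + b + c ≠ 0 := by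
    intro h0
    have : (2 : F) * ((c + a) * (c + b)) = (a + b + c) ^ 2 := by linear_combination -h
    rw [h0] at this
    simp only [ne_eq, zero_pow, OfNat.ofNat_ne_zero, not_false_eq_true] at this
    exact (mul_ne_zero h2 (mul_ne_zero hca hcb)) (by simpa using this)
  have key : quadraticChar F 2 * quadraticChar F (c + a) * quadraticChar F (c + b) = 1 := by
    rw [← map_mul, ← map_mul]
    have : (2 : F) * (c + a) * (c + b) = (a + b + c) ^ 2 := by linear_combination -h
    rw [this]
    exact quadraticChar_sq_one' habc
  have keyA : quadraticChar F (c + a) * quadraticChar F (c - a) = 1 := by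
    rw [← map_mul]
    have : (c + a) * (c - a) = b ^ 2 := by linear_combination -h
    rw [this]
    exact quadraticChar_sq_one' hb
  have keyB : quadraticChar F (c + b) * quadraticChar F (c - b) = 1 := by
    rw [← map_mul]
    have : (c + b) * (c - b) = a ^ 2 := by linear_combination -h
    rw [this]
    exact quadraticChar_sq_one' ha
  have sqA : quadraticChar F (c + a) ^ 2 = 1 := quadraticChar_sq_one hca
  have sqB : quadraticChar F (c + b) ^ 2 = 1 := quadraticChar_sq_one hcb
  refine ⟨mul_ne_zero hca hcb, ?_, ?_, ?_⟩
  · linear_combination quadraticChar F 2 * quadraticChar F (c + b) * sqA -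
      quadraticChar F (c + a) * key
  · linear_combination quadraticChar F (c - a) * sqA - quadraticChar F (c + a) * keyA
  · linear_combination quadraticChar F (c - b) * sqB - quadraticChar F (c + b) * keyB
end

section
/- Let q be an odd prime power and τ ∈ F_q such that τ(τ+1) is a nonzero square. Then for either square root s of τ(τ+1), the Legendre symbols of 2τ+1+2s, of τ, and of τ+1 all coincide. -/
/-- If `τ(τ+1)` is a nonzero square with square root `s`, then the quadratic characters
of `2τ+1+2s`, `τ`, and `τ+1` all coincide. -/
theorem legendre_tau_consequence (F : Type*) [Field F] [Fintype F] [DecidableEq F] (q : ℕ)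
    (hq : Fintype.card F = q) (hodd : Odd q) (τ s : F)
    (h0 : τ * (τ + 1) ≠ 0) (hs : s ^ 2 = τ * (τ + 1)) :
    quadraticChar F (2 * τ + 1 + 2 * s) = quadraticChar F τ ∧
    quadraticChar F τ = quadraticChar F (τ + 1) := by
  have hτ : τ ≠ 0 := fun h => h0 (by simp [h])
  have hτ1 : τ + 1 ≠ 0 := fun h => h0 (by rw [h, mul_zero])
  have hsne : s ≠ 0 := by
    intro h
    apply h0
    rw [← hs, h]; ring
  have hts : τ + s ≠ 0 := by
    intro h
    apply hτ
    have hsτ : s = -τ := by linear_combination h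
    rw [hsτ] at hs
    linear_combination -hs
  have hχτ2 : quadraticChar F τ * quadraticChar F τ = 1 := by
    have := quadraticChar_sq_one (F := F) hτ
    rwa [sq] at this
  have h2 : quadraticChar F τ * quadraticChar F (τ + 1) = 1 := by
    rw [← map_mul, ← hs]
    exact quadraticChar_sq_one' hsne
  have e1 : τ * (2 * τ + 1 + 2 * s) = (τ + s) ^ 2 := by linear_combination -hs
  have h1 : quadraticChar F τ * quadraticChar F (2 * τ + 1 + 2 * s) = 1 := by
    rw [← map_mul, e1]
    exact quadraticChar_sq_one' hts
  constructor
  · have := congrArg (quadraticChar F τ * ·) h1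
    simp only [← mul_assoc, hχτ2, one_mul, mul_one] at this
    exact this
  · have := congrArg (quadraticChar F τ * ·) h2
    simp only [← mul_assoc, hχτ2, one_mul, mul_one] at this
    exact this.symm
end

section
/- Let q be an odd prime power. The product of all a ∈ F_q^× such that 4-a and a are both nonsquares in F_q equals 2. -/
open scoped Classical
open Finset Polynomial

lemma pt40_val_le_roots {F : Type*} [Field F] {c : F} {n : ℕ} (hn : 0 < n)
    (s : Finset F) (hs : ∀ x ∈ s, x ^ n = c) : s.val ≤ (X ^ n - C c : F[X]).roots := by
  refine Multiset.le_iff_count.2 fun b => ?_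
  by_cases hb : b ∈ s
  · have hroot : IsRoot (X ^ n - C c : F[X]) b := by simp [IsRoot, hs b hb]
    have h1 : Multiset.count b s.val = 1 := Multiset.count_eq_one_of_mem s.nodup hb
    rw [h1, Polynomial.count_roots]
    exact (Polynomial.rootMultiplicity_pos (monic_X_pow_sub_C c hn.ne').ne_zero).2 hroot
  · have : Multiset.count b s.val = 0 := Multiset.count_eq_zero_of_notMem hb
    simp [this]

lemma pt40_card_le {F : Type*} [Field F] {c : F} {n : ℕ} (hn : 0 < n)
    (s : Finset F) (hs : ∀ x ∈ s, x ^ n = c) : s.card ≤ n := by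
  have h := Multiset.card_le_card (pt40_val_le_roots hn s hs)
  have h2 := Polynomial.card_roots' (X ^ n - C c : F[X])
  rw [natDegree_X_pow_sub_C] at h2
  exact le_trans h h2

lemma pt40_prod_sub {F : Type*} [Field F] {c x : F} {n : ℕ} (hn : 0 < n)
    (s : Finset F) (hs : ∀ y ∈ s, y ^ n = c) (hcard : n ≤ s.card) :
    ∏ b ∈ s, (x - b) = x ^ n - c := by
  have h1 := pt40_val_le_roots hn s hs
  have h2 : s.val = (X ^ n - C c : F[X]).roots := by
    refine Multiset.eq_of_le_of_card_le h1 ?_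
    have h3 := Polynomial.card_roots' (X ^ n - C c : F[X])
    rw [natDegree_X_pow_sub_C] at h3
    have : Multiset.card s.val = s.card := rfl
    omega
  have h3 := Polynomial.prod_multiset_X_sub_C_of_monic_of_roots_card_eq
    (monic_X_pow_sub_C c hn.ne')
    (by
      rw [← h2, natDegree_X_pow_sub_C]
      have h3 := Polynomial.card_roots' (X ^ n - C c : F[X])
      rw [natDegree_X_pow_sub_C, ← h2] at h3
      have : Multiset.card s.val = s.card := rfl
      omega)
  have h4 := congrArg (Polynomial.eval x) h3
  rw [Polynomial.eval_multiset_prod, Multiset.map_map] at h4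
  simp only [Function.comp, eval_sub, eval_X, eval_C, eval_pow] at h4
  calc ∏ b ∈ s, (x - b) = (s.val.map fun b => x - b).prod := rfl
    _ = x ^ n - c := by rw [h2]; exact h4

lemma pt40_isSquare_mul_iff {F : Type*} [Field F] [Fintype F] (hF : ringChar F ≠ 2) {x y : F}
    (hx : x ≠ 0) (hy : y ≠ 0) : IsSquare (x * y) ↔ (IsSquare x ↔ IsSquare y) := by
  have h1 : (-1 : F) ≠ 1 := Ring.neg_one_ne_one_of_char_ne_two hF
  rw [FiniteField.isSquare_iff hF (mul_ne_zero hx hy), FiniteField.isSquare_iff hF hx,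
    FiniteField.isSquare_iff hF hy, mul_pow]
  rcases FiniteField.pow_dichotomy hF hx with h | h <;>
    rcases FiniteField.pow_dichotomy hF hy with h' | h' <;>
      simp [h, h', h1]

/-- The product of all `a ∈ F_q^×` with `4-a` and `a` both nonsquares equals `2`. -/
theorem prod_T40 (F : Type*) [Field F] [Fintype F] (q : ℕ)
    (hq : Fintype.card F = q) (hodd : Odd q) :
    (∏ a ∈ Finset.univ.filter (fun a : F =>
        (4 - a ≠ 0 ∧ ¬ IsSquare (4 - a)) ∧ (a ≠ 0 ∧ ¬ IsSquare a)), a) = 2 := by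
  -- basic char facts
  have hchar : ringChar F ≠ 2 := by
    intro h
    have h2 := FiniteField.even_card_of_char_two h
    rw [hq] at h2
    obtain ⟨k, hk⟩ := hodd
    omega
  have htwo : (2 : F) ≠ 0 := Ring.two_ne_zero hchar
  have hneg1 : (-1 : F) ≠ 1 := Ring.neg_one_ne_one_of_char_ne_two hchar
  set m : ℕ := q / 2 with hm
  have hq2 : q = 2 * m + 1 := by
    obtain ⟨k, hk⟩ := hodd; omega
  have hm0 : 0 < m := by
    have h1 : 1 < q := by rw [← hq]; exact Fintype.one_lt_card
    omega
  have hcard2 : Fintype.card F / 2 = m := by rw [hq]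
  have hsq4 : IsSquare (4 : F) := ⟨2, by norm_num⟩
  -- nonsquares
  set NS : Finset F := univ.filter (fun b : F => b ≠ 0 ∧ ¬ IsSquare b) with hNS
  have hNSpow : ∀ b ∈ NS, b ^ m = -1 := by
    intro b hb
    rw [hNS, mem_filter] at hb
    obtain ⟨-, hb0, hbs⟩ := hb
    rcases FiniteField.pow_dichotomy hchar hb0 with h | h
    · exact absurd ((FiniteField.isSquare_iff hchar hb0).2 h) hbs
    · rw [hcard2] at h; exact h
  -- counting: card NS ≥ m
  have hNScard : m ≤ NS.card := by
    set Sq : Finset F := univ.filter (fun b : F => b ^ m = 1) with hSq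
    have hSqcard : Sq.card ≤ m := pt40_card_le hm0 Sq (fun y hy => (mem_filter.1 hy).2)
    have hcover : (univ : Finset F) ⊆ NS ∪ Sq ∪ {0} := by
      intro x _
      by_cases hx0 : x = 0
      · simp [hx0]
      · rcases FiniteField.pow_dichotomy hchar hx0 with h | h
        · rw [hcard2] at h
          simp [hSq, h]
        · rw [hcard2] at h
          have hxs : ¬ IsSquare x := by
            rw [FiniteField.isSquare_iff hchar hx0, hcard2, h]
            exact hneg1
          simp [hNS, hx0, hxs]
    have h1 : q ≤ (NS ∪ Sq ∪ {0} : Finset F).card := by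
      rw [← hq, ← Finset.card_univ]
      exact Finset.card_le_card hcover
    have h2 : (NS ∪ Sq ∪ {0} : Finset F).card ≤ NS.card + Sq.card + 1 := by
      calc (NS ∪ Sq ∪ {0} : Finset F).card ≤ (NS ∪ Sq : Finset F).card + ({0} : Finset F).card :=
            Finset.card_union_le _ _
        _ ≤ NS.card + Sq.card + 1 := by
            have := Finset.card_union_le NS Sq
            simp only [Finset.card_singleton]
            omega
    omega
  -- Lemma 1 : ∏_{b ∈ NS} (4 - b) = 2
  have hL1 : ∏ b ∈ NS, ((4 : F) - b) = 2 := by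
    rw [pt40_prod_sub hm0 NS hNSpow hNScard]
    have h4 : (4 : F) = 2 ^ 2 := by norm_num
    have h2q : (2 : F) ^ (q - 1) = 1 := by
      rw [← hq]; exact FiniteField.pow_card_sub_one_eq_one 2 htwo
    rw [h4, ← pow_mul]
    have : 2 * m = q - 1 := by omega
    rw [this, h2q]
    ring
  -- named sets
  set T : Finset F := univ.filter (fun a : F =>
      (4 - a ≠ 0 ∧ ¬ IsSquare (4 - a)) ∧ (a ≠ 0 ∧ ¬ IsSquare a)) with hTdef
  set D : Finset F := univ.filter (fun a : F =>
      (4 - a ≠ 0 ∧ ¬ IsSquare (4 - a)) ∧ (a ≠ 0 ∧ IsSquare a)) with hDdef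
  set Cs : Finset F := univ.filter (fun a : F =>
      (4 - a ≠ 0 ∧ IsSquare (4 - a)) ∧ (a ≠ 0 ∧ ¬ IsSquare a)) with hCdef
  set E : Finset F := univ.filter (fun a : F =>
      a * (4 - a) ≠ 0 ∧ ¬ IsSquare (a * (4 - a))) with hEdef
  set W : Finset F := univ.filter (fun a : F => 4 - a ≠ 0 ∧ ¬ IsSquare (4 - a)) with hWdef
  have key0 : ∀ a : F, (4 - a ≠ 0 ∧ ¬ IsSquare (4 - a)) → a ≠ 0 := by
    intro a h ha
    rw [ha, sub_zero] at h
    exact h.2 hsq4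
  -- step f2 : ∏ over W equals ∏ over NS of (4 - b) = 2
  have hf2 : ∏ a ∈ W, a = 2 := by
    rw [← hL1]
    refine Finset.prod_nbij' (fun a => 4 - a) (fun b => 4 - b) ?_ ?_ ?_ ?_ ?_
    · intro a ha
      rw [hWdef, mem_filter] at ha
      rw [hNS, mem_filter]
      exact ⟨mem_univ _, ha.2⟩
    · intro b hb
      rw [hNS, mem_filter] at hb
      rw [hWdef, mem_filter]
      refine ⟨mem_univ _, ?_⟩
      have : (4 : F) - (4 - b) = b := by ring
      rw [this]
      exact hb.2
    · intro a _; ring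
    · intro a _; ring
    · intro a _; ring
  -- split W into T and D
  have hsplit1 : (∏ a ∈ D, a) * (∏ a ∈ T, a) = 2 := by
    rw [← hf2, ← Finset.prod_filter_mul_prod_filter_not W (fun a => IsSquare a) (fun a => a)]
    congr 1
    · apply Finset.prod_congr _ (fun _ _ => rfl)
      rw [hWdef, hDdef, Finset.filter_filter]
      apply Finset.filter_congr
      intro a _
      constructor
      · intro h; exact ⟨h.1, h.2.2⟩
      · intro h; exact ⟨h.1, ⟨key0 a h.1, h.2⟩⟩
    · apply Finset.prod_congr _ (fun _ _ => rfl)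
      rw [hWdef, hTdef, Finset.filter_filter]
      apply Finset.filter_congr
      intro a _
      constructor
      · intro h; exact ⟨h.1, h.2.2⟩
      · intro h; exact ⟨h.1, ⟨key0 a h.1, h.2⟩⟩
  -- split E into D and Cs
  have hprodne : ∀ a : F, a * (4 - a) ≠ 0 → a ≠ 0 ∧ 4 - a ≠ 0 := fun a h => mul_ne_zero_iff.1 h
  have hED : E.filter (fun a => IsSquare a) = D := by
    rw [hEdef, hDdef, Finset.filter_filter]
    apply Finset.filter_congr
    intro a _
    constructor
    · rintro ⟨⟨h0, hns⟩, hsa⟩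
      obtain ⟨ha, h4a⟩ := hprodne a h0
      have hmul := pt40_isSquare_mul_iff hchar ha h4a
      refine ⟨⟨h4a, ?_⟩, ha, hsa⟩
      intro hs4
      exact hns (hmul.2 (iff_of_true hsa hs4))
    · rintro ⟨⟨h4a, hns4⟩, ha, hsa⟩
      have hmul := pt40_isSquare_mul_iff hchar ha h4a
      refine ⟨⟨mul_ne_zero ha h4a, ?_⟩, hsa⟩
      intro hs
      exact hns4 ((hmul.1 hs).1 hsa)
  have hEC : E.filter (fun a => ¬ IsSquare a) = Cs := by
    rw [hEdef, hCdef, Finset.filter_filter]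
    apply Finset.filter_congr
    intro a _
    constructor
    · rintro ⟨⟨h0, hns⟩, hsa⟩
      obtain ⟨ha, h4a⟩ := hprodne a h0
      have hmul := pt40_isSquare_mul_iff hchar ha h4a
      refine ⟨⟨h4a, ?_⟩, ha, hsa⟩
      by_contra hs4
      exact hns (hmul.2 (iff_of_false hsa hs4))
    · rintro ⟨⟨h4a, hs4⟩, ha, hsa⟩
      have hmul := pt40_isSquare_mul_iff hchar ha h4a
      refine ⟨⟨mul_ne_zero ha h4a, ?_⟩, hsa⟩
      intro hs
      exact hsa ((hmul.1 hs).2 hs4)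
  have hEsplit : (∏ a ∈ D, a) * (∏ a ∈ Cs, a) = ∏ a ∈ E, a := by
    rw [← hED, ← hEC]
    exact Finset.prod_filter_mul_prod_filter_not E _ _
  -- fiberwise over Cs
  have hmaps : ∀ a ∈ E, a * (4 - a) ∈ Cs := by
    intro a ha
    rw [hEdef, mem_filter] at ha
    obtain ⟨-, h0, hns⟩ := ha
    have ha2 : a ≠ 2 := by
      intro h
      rw [h] at hns
      have : (2 : F) * (4 - 2) = 4 := by norm_num
      rw [this] at hns
      exact hns hsq4
    have h42 : (4 : F) - a * (4 - a) = (2 - a) * (2 - a) := by ring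
    have h2a : (2 : F) - a ≠ 0 := sub_ne_zero.2 (fun h => ha2 h.symm)
    rw [hCdef, mem_filter]
    exact ⟨mem_univ _, ⟨by rw [h42]; exact mul_ne_zero h2a h2a, ⟨2 - a, h42⟩⟩, h0, hns⟩
  have hfiber : ∀ v ∈ Cs, ∏ a ∈ E.filter (fun a => a * (4 - a) = v), a = v := by
    intro v hv
    rw [hCdef, mem_filter] at hv
    obtain ⟨-, ⟨hv4, r, hr⟩, hv0, hvns⟩ := hv
    have hr0 : r ≠ 0 := by
      intro h
      rw [h, mul_zero] at hr
      exact hv4 hr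
    have hne : (2 : F) + r ≠ 2 - r := by
      intro h
      have h2 : (2 : F) * r = 0 := by linear_combination h
      rcases mul_eq_zero.1 h2 with h' | h'
      · exact htwo h'
      · exact hr0 h'
    have hset : E.filter (fun a => a * (4 - a) = v) = {2 + r, 2 - r} := by
      ext a
      rw [hEdef, Finset.filter_filter]
      simp only [mem_filter, mem_univ, true_and, mem_insert, mem_singleton]
      constructor
      · rintro ⟨⟨-, -⟩, heq⟩
        have hfac : (a - 2 - r) * (a - 2 + r) = 0 := by linear_combination -heq + hr
        rcases mul_eq_zero.1 hfac with h' | h'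
        · exact Or.inl (by linear_combination h')
        · exact Or.inr (by linear_combination h')
      · intro h
        have heq : a * (4 - a) = v := by
          rcases h with rfl | rfl
          · linear_combination hr
          · linear_combination hr
        refine ⟨⟨?_, ?_⟩, heq⟩
        · rw [heq]; exact hv0
        · rw [heq]; exact hvns
    rw [hset, Finset.prod_pair hne]
    linear_combination hr
  have hEC2 : ∏ a ∈ E, a = ∏ v ∈ Cs, v :=
    calc ∏ a ∈ E, a
        = ∏ v ∈ Cs, ∏ a ∈ E.filter (fun a => a * (4 - a) = v), a :=
          (Finset.prod_fiberwise_of_maps_to hmaps _).symm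
      _ = ∏ v ∈ Cs, v := Finset.prod_congr rfl hfiber
  have hCne : (∏ v ∈ Cs, v) ≠ 0 := by
    rw [Finset.prod_ne_zero_iff]
    intro v hv
    rw [hCdef, mem_filter] at hv
    exact hv.2.2.1
  have hD1 : (∏ a ∈ D, a) = 1 := by
    have h := hEsplit.trans hEC2
    have h' : (∏ a ∈ D, a) * (∏ v ∈ Cs, v) = 1 * (∏ v ∈ Cs, v) := by
      rw [one_mul]; exact h
    exact mul_right_cancel₀ hCne h'
  rw [hD1, one_mul] at hsplit1
  exact hsplit1
end

section
/- Let q be an odd prime power with q ≡ ±3 (mod 8). Then the product of all a ∈ F_q^× such that 2-a and 2+a are both nonzero squares equals (-1)^{⌊q/8⌋}. -/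
/-!
Write `q = 4r ± 1` with `r` odd, and let `2 - a = x²`, `2 + a = y²`, so that `x² + y² = 4`.
Over an algebraic closure, with `i² = -1`, such points correspond to units `z` via
`x = z + z⁻¹`, `y = i (z - z⁻¹)`, and then `a = -(z² + z⁻²)`. The Frobenius `u ↦ u^q` acts on
the `4r`-th roots of unity as the identity or as inversion, and this makes `x, y ∈ F_q` equivalent
to `z^(4r) = 1`. Hence the elements `a` are exactly the `-(η^k + η⁻ᵏ)`, `1 ≤ k < r`, for a
primitive `2r`-th root of unity `η`, and their product is
`η^(-r(r-1)/2) · ∏ (1 + η^(2k)) = (-1)^((r-1)/2)`, the last product being `1` because `r` is odd.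
The condition `a ≠ 0` is automatic: `2` is not a square in `F_q`.
-/

open scoped Classical

open Finset Polynomial

namespace IsPrimitiveRoot

variable {R : Type*} [CommRing R] [IsDomain R]

lemma prod_one_add_pow_eq_one {n : ℕ} {μ : R} (hμ : IsPrimitiveRoot μ (n + 1)) (hn : Even n) :
    ∏ k ∈ range n, (1 + μ ^ (k + 1)) = 1 := by
  -- `∏ (X - μ ^ (k + 1)) = 1 + X + ⋯ + X ^ n`, evaluated at `X = -1`
  have := X_pow_sub_C_eq_prod hμ n.zero_lt_succ (one_pow (n + 1))
  rw [C_1, ← mul_geom_sum, prod_range_succ', pow_zero, mul_one, mul_comm, eq_comm] at this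
  replace this := congrArg (eval (-1)) (mul_right_cancel₀ (X_sub_C_ne_zero 1) this)
  simp only [eval_prod, eval_sub, eval_X, eval_C, eval_geom_sum, neg_one_geom_sum,
    Nat.even_add_one, hn, not_true_eq_false, if_false, mul_one] at this
  calc ∏ k ∈ range n, (1 + μ ^ (k + 1)) = ∏ k ∈ range n, (-1) * (-1 - μ ^ (k + 1)) :=
        prod_congr rfl fun _ _ ↦ by ring
    _ = 1 := by rw [prod_mul_distrib, this, prod_const, card_range, hn.neg_one_pow, mul_one]

lemma sq_pow_eq_neg_one {r : ℕ} {θ : R} (hθ : IsPrimitiveRoot θ (4 * r)) (hr : r ≠ 0) :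
    (θ ^ r) ^ 2 = -1 := by
  rw [← pow_mul, mul_comm]
  exact (hθ.pow (by omega) (by ring)).eq_neg_one_of_two_right

lemma pow_eq_neg_one_of_two_mul {r : ℕ} {η : R} (hη : IsPrimitiveRoot η (2 * r)) (hr : r ≠ 0) :
    η ^ r = -1 :=
  (hη.pow (by omega) (mul_comm 2 r)).eq_neg_one_of_two_right

variable {K : Type*} [Field K] {r : ℕ} {η : K}

lemma injOn_pow_add_inv_pow (hη : IsPrimitiveRoot η (2 * r)) :
    Set.InjOn (fun k ↦ η ^ k + (η ^ k)⁻¹) (Set.Iic r) := by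
  intro j (hj : j ≤ r) k (hk : k ≤ r) (hjk : η ^ j + (η ^ j)⁻¹ = η ^ k + (η ^ k)⁻¹)
  obtain rfl | hr := Nat.eq_zero_or_pos r
  · omega
  have hne : ∀ n, η ^ n ≠ 0 := fun n ↦ pow_ne_zero n (hη.ne_zero (by omega))
  have key : (η ^ j - η ^ k) * (η ^ j * η ^ k - 1) = 0 := by
    linear_combination (η ^ j * η ^ k) * hjk - η ^ k * mul_inv_cancel₀ (hne j) +
      η ^ j * mul_inv_cancel₀ (hne k)
  rcases mul_eq_zero.mp key with h | h
  · exact hη.pow_inj (by omega) (by omega) (sub_eq_zero.mp h)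
  · rw [sub_eq_zero, ← pow_add, hη.pow_eq_one_iff_dvd] at h
    obtain h0 | hpos := Nat.eq_zero_or_pos (j + k)
    · omega
    · have := Nat.le_of_dvd hpos h
      omega

lemma exists_mem_Ico_add_inv_eq (hη : IsPrimitiveRoot η (2 * r)) (hr : r ≠ 0) {u : K}
    (hu : u ^ (2 * r) = 1) (hu₁ : u ≠ 1) (hu₂ : u ≠ -1) :
    ∃ k ∈ Ico 1 r, u + u⁻¹ = η ^ k + (η ^ k)⁻¹ := by
  have : NeZero (2 * r) := ⟨by omega⟩
  obtain ⟨k, hk, rfl⟩ := hη.eq_pow_of_pow_eq_one hu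
  have hk₀ : k ≠ 0 := by rintro rfl; exact hu₁ (pow_zero η)
  have hkr : k ≠ r := by rintro rfl; exact hu₂ (hη.pow_eq_neg_one_of_two_mul hr)
  obtain hlt | hgt := lt_or_gt_of_ne hkr
  · exact ⟨k, mem_Ico.mpr ⟨by omega, hlt⟩, rfl⟩
  · refine ⟨2 * r - k, mem_Ico.mpr ⟨by omega, by omega⟩, ?_⟩
    have : η ^ (2 * r - k) = (η ^ k)⁻¹ := eq_inv_of_mul_eq_one_left <| by
      rw [← pow_add, Nat.sub_add_cancel hk.le, hη.pow_eq_one]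
    rw [this, inv_inv, add_comm]

lemma prod_Ico_neg_pow_add_inv_pow (hη : IsPrimitiveRoot η (2 * r)) (hr : Odd r) :
    ∏ k ∈ Ico 1 r, -(η ^ k + (η ^ k)⁻¹) = (-1) ^ (r / 2) := by
  obtain ⟨t, rfl⟩ := hr
  have hη₀ : η ≠ 0 := hη.ne_zero (by omega)
  have hsum : ∑ k ∈ range (2 * t), (k + 1) = (2 * t + 1) * t := by
    have := sum_range_id_mul_two (2 * t + 1)
    rw [sum_range_succ', add_zero, Nat.add_sub_cancel] at this
    linarith
  have hpow : ∏ k ∈ range (2 * t), η ^ (k + 1) = (-1) ^ t := by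
    rw [prod_pow_eq_pow_sum, hsum, pow_mul, hη.pow_eq_neg_one_of_two_mul (by omega)]
  calc ∏ k ∈ Ico 1 (2 * t + 1), -(η ^ k + (η ^ k)⁻¹)
      = ∏ k ∈ range (2 * t), (-1) * ((η ^ (k + 1))⁻¹ * (1 + (η ^ 2) ^ (k + 1))) := by
        rw [prod_Ico_eq_prod_range, Nat.add_sub_cancel]
        refine prod_congr rfl fun k _ ↦ ?_
        rw [add_comm 1 k, ← pow_mul, mul_comm 2, pow_mul]
        field_simp
        ring
    _ = (-1) ^ t := by
        rw [prod_mul_distrib, prod_mul_distrib, prod_inv_distrib, hpow,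
          (hη.pow (by omega) rfl).prod_one_add_pow_eq_one (even_two_mul t),
          prod_const, card_range, (even_two_mul t).neg_one_pow, ← inv_pow, inv_neg, inv_one]
        ring
    _ = (-1) ^ ((2 * t + 1) / 2) := by congr 1; omega

end IsPrimitiveRoot

lemma add_inv_eq_zero_iff_sq_eq_neg_one {K : Type*} [Field K] {z : K} (hz : z ≠ 0) :
    z + z⁻¹ = 0 ↔ z ^ 2 = -1 := by
  rw [← mul_eq_zero_iff_left hz, mul_add, mul_inv_cancel₀ hz, ← sq, add_eq_zero_iff_eq_neg]

lemma sub_inv_eq_zero_iff_sq_eq_one {K : Type*} [Field K] {z : K} (hz : z ≠ 0) :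
    z - z⁻¹ = 0 ↔ z ^ 2 = 1 := by
  rw [sub_eq_zero, ← mul_eq_one_iff_eq_inv₀ hz, sq]

lemma pow_eq_self_or_inv_of_pow_eq_one {M : Type*} [DivisionMonoid M] {q n : ℕ}
    (hq : q = n + 1 ∨ q + 1 = n) :
    (∀ ζ : M, ζ ^ n = 1 → ζ ^ q = ζ) ∨ ∀ ζ : M, ζ ^ n = 1 → ζ ^ q = ζ⁻¹ := by
  rcases hq with rfl | rfl
  · exact .inl fun ζ hζ ↦ by rw [pow_succ, hζ, one_mul]
  · exact .inr fun ζ hζ ↦ eq_inv_of_mul_eq_one_left (by rw [← pow_succ, hζ])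

lemma pow_four_mul_eq_one_of_sq_eq_neg_one {M : Type*} [Monoid M] [HasDistribNeg M] {i : M}
    (hi : i ^ 2 = -1) (r : ℕ) : i ^ (4 * r) = 1 := by
  rw [pow_mul, show 4 = 2 * 2 from rfl, pow_mul, hi, neg_one_sq, one_pow]

noncomputable def twoPmSquares (F : Type*) [Field F] [Fintype F] : Finset F :=
  univ.filter fun a ↦ a ≠ 0 ∧ (2 - a ≠ 0 ∧ IsSquare (2 - a)) ∧ (2 + a ≠ 0 ∧ IsSquare (2 + a))

namespace FiniteField

variable {F K : Type*} [Field F] [Fintype F] [Field K] [Algebra F K]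

lemma exists_algebraMap_eq_of_pow_card_eq {u : K} (hu : u ^ Fintype.card F = u) :
    ∃ a : F, algebraMap F K a = u := by
  have hcard : Multiset.card (X ^ Fintype.card F - X : F[X]).roots =
      (X ^ Fintype.card F - X : F[X]).natDegree := by
    rw [roots_X_pow_card_sub_X, X_pow_card_sub_X_natDegree_eq _ Fintype.one_lt_card,
      ← card_def, card_univ]
  have hroot : u ∈ ((X ^ Fintype.card F - X : F[X]).map (algebraMap F K)).roots := by
    rw [mem_roots (Polynomial.map_ne_zero (X_pow_card_sub_X_ne_zero F Fintype.one_lt_card))]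
    simp [hu]
  rw [← roots_map_of_injective_of_card_eq_natDegree (algebraMap F K).injective hcard,
    roots_X_pow_card_sub_X, Multiset.mem_map] at hroot
  obtain ⟨a, -, ha⟩ := hroot
  exact ⟨a, ha⟩

variable {r : ℕ}

lemma exists_algebraMap_eq_add_inv_and_mul_sub_inv
    (hq : Fintype.card F = 4 * r + 1 ∨ Fintype.card F + 1 = 4 * r) {i ζ : K} (hi : i ^ 2 = -1)
    (hζ : ζ ^ (4 * r) = 1) :
    (∃ x : F, algebraMap F K x = ζ + ζ⁻¹) ∧ ∃ y : F, algebraMap F K y = i * (ζ - ζ⁻¹) := by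
  have hi₄ := pow_four_mul_eq_one_of_sq_eq_neg_one hi r
  have hi_inv : i⁻¹ = -i := (eq_inv_of_mul_eq_one_left (by linear_combination -hi)).symm
  constructor <;> apply exists_algebraMap_eq_of_pow_card_eq <;>
    change frobeniusAlgHom F K _ = _ <;>
    simp only [map_add, map_sub, map_mul, map_inv₀, coe_frobeniusAlgHom] <;>
    rcases pow_eq_self_or_inv_of_pow_eq_one (M := K) hq with h | h
  · rw [h ζ hζ]
  · rw [h ζ hζ, inv_inv, add_comm]
  · rw [h ζ hζ, h i hi₄]
  · rw [h ζ hζ, h i hi₄, inv_inv, hi_inv]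
    ring

lemma exists_pow_eq_one_of_sq_add_sq
    (hq : Fintype.card F = 4 * r + 1 ∨ Fintype.card F + 1 = 4 * r) {i : K} (hi : i ^ 2 = -1)
    {x y : F} (hxy : x ^ 2 + y ^ 2 = 4) :
    ∃ z : K, z ^ (4 * r) = 1 ∧ z + z⁻¹ = algebraMap F K x ∧ i * (z - z⁻¹) = algebraMap F K y := by
  set X := algebraMap F K x
  set Y := algebraMap F K y
  have h2 : (2 : K) ≠ 0 := by
    rw [← map_ofNat (algebraMap F K), _root_.map_ne_zero]
    exact Ring.two_ne_zero fun h ↦ by have := even_card_iff_char_two.mp h; omega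
  have hXY : X ^ 2 + Y ^ 2 = 4 := by
    simpa only [map_add, map_pow, map_ofNat] using congrArg (algebraMap F K) hxy
  have hzw : (X - i * Y) / 2 * ((X + i * Y) / 2) = 1 := by
    field_simp
    linear_combination hXY - Y ^ 2 * hi
  have hz_inv : ((X - i * Y) / 2)⁻¹ = (X + i * Y) / 2 := (eq_inv_of_mul_eq_one_right hzw).symm
  refine ⟨(X - i * Y) / 2, ?_, by rw [hz_inv]; field_simp; ring,
    by rw [hz_inv]; field_simp; linear_combination -2 * Y * hi⟩
  have hfrob : ((X - i * Y) / 2) ^ Fintype.card F = (X - i ^ Fintype.card F * Y) / 2 := by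
    change frobeniusAlgHom F K _ = _
    simp only [X, Y, map_div₀, map_sub, map_mul, AlgHom.commutes, map_ofNat]
    simp only [coe_frobeniusAlgHom]
  have hi₄ := pow_four_mul_eq_one_of_sq_eq_neg_one hi r
  rcases hq with hq | hq
  · rw [hq, pow_succ i, hi₄, one_mul, pow_succ] at hfrob
    exact mul_right_cancel₀ (left_ne_zero_of_mul_eq_one hzw) (hfrob.trans (one_mul _).symm)
  · have hi_q : i ^ Fintype.card F = -i := by
      have h : i ^ Fintype.card F * i = 1 := by rw [← pow_succ, hq, hi₄]
      linear_combination (-i) * h + i ^ Fintype.card F * hi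
    rw [← hq, pow_succ, hfrob, hi_q, ← hzw]
    ring

lemma exists_mem_Ico_of_isSquare
    (hq : Fintype.card F = 4 * r + 1 ∨ Fintype.card F + 1 = 4 * r) {θ : K}
    (hθ : IsPrimitiveRoot θ (4 * r)) (hr : r ≠ 0) {a : F}
    (h₁ : 2 - a ≠ 0 ∧ IsSquare (2 - a)) (h₂ : 2 + a ≠ 0 ∧ IsSquare (2 + a)) :
    ∃ k ∈ Ico 1 r, algebraMap F K a = -((θ ^ 2) ^ k + ((θ ^ 2) ^ k)⁻¹) := by
  obtain ⟨hx₀, x, hx⟩ := h₁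
  obtain ⟨hy₀, y, hy⟩ := h₂
  have hη : IsPrimitiveRoot (θ ^ 2) (2 * r) := hθ.pow (by omega) (by ring)
  have hi : (θ ^ r) ^ 2 = -1 := hθ.sq_pow_eq_neg_one (by omega)
  obtain ⟨z, hz, hzx, hzy⟩ :=
    exists_pow_eq_one_of_sq_add_sq hq hi (x := x) (y := y) (by linear_combination -hx - hy)
  have hz₀ : z ≠ 0 := ne_zero_pow (n := 4 * r) (by omega) (by rw [hz]; exact one_ne_zero)
  have hu₁ : z ^ 2 ≠ 1 := fun h ↦ hy₀ <| by
    have : algebraMap F K y = 0 := by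
      rw [← hzy, (sub_inv_eq_zero_iff_sq_eq_one hz₀).mpr h, mul_zero]
    rw [hy, (map_eq_zero _).mp this, mul_zero]
  have hu₂ : z ^ 2 ≠ -1 := fun h ↦ hx₀ <| by
    have : algebraMap F K x = 0 := by
      rw [← hzx, (add_inv_eq_zero_iff_sq_eq_neg_one hz₀).mpr h]
    rw [hx, (map_eq_zero _).mp this, mul_zero]
  obtain ⟨k, hk, hk_eq⟩ := hη.exists_mem_Ico_add_inv_eq hr
    (by rw [← pow_mul, show 2 * (2 * r) = 4 * r by ring, hz]) hu₁ hu₂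
  refine ⟨k, hk, ?_⟩
  calc algebraMap F K a = 2 - algebraMap F K x * algebraMap F K x := by
        rw [← map_mul, ← hx, map_sub, map_ofNat]; ring
    _ = -((θ ^ 2) ^ k + ((θ ^ 2) ^ k)⁻¹) := by
        rw [← hk_eq, ← hzx]; field_simp; ring

lemma exists_mem_twoPmSquares
    (hq : Fintype.card F = 4 * r + 1 ∨ Fintype.card F + 1 = 4 * r) (hr : Odd r) {θ : K}
    (hθ : IsPrimitiveRoot θ (4 * r)) {k : ℕ} (hk : k ∈ Ico 1 r) :
    ∃ a ∈ twoPmSquares F, algebraMap F K a = -((θ ^ 2) ^ k + ((θ ^ 2) ^ k)⁻¹) := by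
  rw [mem_Ico] at hk
  have hθ₀ : θ ≠ 0 := hθ.ne_zero (by omega)
  have hη : IsPrimitiveRoot (θ ^ 2) (2 * r) := hθ.pow (by omega) (by ring)
  have hi : (θ ^ r) ^ 2 = -1 := hθ.sq_pow_eq_neg_one (by omega)
  have hsq : (θ ^ 2) ^ k = (θ ^ k) ^ 2 := by rw [← pow_mul, ← pow_mul, mul_comm]
  obtain ⟨⟨x, hx⟩, ⟨y, hy⟩⟩ := exists_algebraMap_eq_add_inv_and_mul_sub_inv hq hi
    (ζ := θ ^ k) (by rw [← pow_mul, mul_comm, pow_mul, hθ.pow_eq_one, one_pow])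
  have hx₀ : x ≠ 0 := by
    rintro rfl
    rw [map_zero, eq_comm, add_inv_eq_zero_iff_sq_eq_neg_one (pow_ne_zero k hθ₀), ← hsq,
      ← hη.pow_eq_neg_one_of_two_mul (by omega)] at hx
    have := hη.pow_inj (by omega) (by omega) hx
    omega
  have hy₀ : y ≠ 0 := by
    rintro rfl
    rw [map_zero, eq_comm, mul_eq_zero, sub_inv_eq_zero_iff_sq_eq_one (pow_ne_zero k hθ₀),
      ← hsq] at hy
    rcases hy with hi₀ | h
    · exact pow_ne_zero r hθ₀ hi₀
    · exact hη.pow_ne_one_of_pos_of_lt (by omega) (by omega) h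
  have h2a : 2 + (2 - x * x) = y * y := by
    apply (algebraMap F K).injective
    simp only [map_add, map_sub, map_mul, map_ofNat, hx, hy]
    linear_combination (-(θ ^ k - (θ ^ k)⁻¹) ^ 2) * hi - 4 * mul_inv_cancel₀ (pow_ne_zero k hθ₀)
  refine ⟨2 - x * x, ?_, ?_⟩
  · simp only [twoPmSquares, mem_filter, mem_univ, true_and]
    refine ⟨fun ha ↦ ?_, ⟨by simpa using hx₀, x, by ring⟩, ⟨by simp [h2a, hy₀], y, h2a⟩⟩
    have := isSquare_two_iff.mp ⟨x, by linear_combination ha⟩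
    obtain ⟨t, rfl⟩ := hr
    omega
  · simp only [map_sub, map_mul, map_ofNat, hx, hsq]
    field_simp
    ring

lemma image_algebraMap_twoPmSquares
    (hq : Fintype.card F = 4 * r + 1 ∨ Fintype.card F + 1 = 4 * r) (hr : Odd r) {θ : K}
    (hθ : IsPrimitiveRoot θ (4 * r)) :
    (twoPmSquares F).image (algebraMap F K) =
      (Ico 1 r).image fun k ↦ -((θ ^ 2) ^ k + ((θ ^ 2) ^ k)⁻¹) := by
  ext u
  simp only [mem_image]
  constructor
  · rintro ⟨a, ha, rfl⟩
    simp only [twoPmSquares, mem_filter] at ha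
    obtain ⟨k, hk, h⟩ := exists_mem_Ico_of_isSquare hq hθ hr.pos.ne' ha.2.2.1 ha.2.2.2
    exact ⟨k, hk, h.symm⟩
  · rintro ⟨k, hk, rfl⟩
    exact exists_mem_twoPmSquares hq hr hθ hk

lemma prod_twoPmSquares (hq : Fintype.card F = 4 * r + 1 ∨ Fintype.card F + 1 = 4 * r)
    (hr : Odd r) : ∏ a ∈ twoPmSquares F, a = (-1) ^ (r / 2) := by
  have : NeZero ((4 * r : ℕ) : F) := ⟨by
    have hq₀ := cast_card_eq_zero F
    rcases hq with h | h <;> have h' := congrArg (Nat.cast : ℕ → F) h <;> push_cast at h' ⊢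
    · rw [show (4 * r : F) = -1 by linear_combination -h' + hq₀]
      exact neg_ne_zero.mpr one_ne_zero
    · rw [show (4 * r : F) = 1 by linear_combination -h' + hq₀]
      exact one_ne_zero⟩
  obtain ⟨θ, hθ⟩ := HasEnoughRootsOfUnity.exists_primitiveRoot (AlgebraicClosure F) (4 * r)
  have hη : IsPrimitiveRoot (θ ^ 2) (2 * r) := hθ.pow (by have := hr.pos; omega) (by ring)
  have hinj : Set.InjOn (fun k ↦ -((θ ^ 2) ^ k + ((θ ^ 2) ^ k)⁻¹)) (Ico 1 r) :=
    neg_injective.comp_injOn <| hη.injOn_pow_add_inv_pow.mono fun k hk ↦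
      Set.mem_Iic.mpr (mem_Ico.mp hk).2.le
  apply (algebraMap F (AlgebraicClosure F)).injective
  rw [map_prod, ← prod_image (f := fun u ↦ u) fun a _ b _ h ↦ (algebraMap F _).injective h,
    image_algebraMap_twoPmSquares hq hr hθ, prod_image hinj, hη.prod_Ico_neg_pow_add_inv_pow hr]
  simp

end FiniteField

theorem prod_T22_plus_general (F : Type*) [Field F] [Fintype F] (q : ℕ)
    (hq : Fintype.card F = q) (h8 : q % 8 = 3 ∨ q % 8 = 5) :
    (∏ a ∈ Finset.univ.filter (fun a : F =>
        a ≠ 0 ∧ (2 - a ≠ 0 ∧ IsSquare (2 - a)) ∧ (2 + a ≠ 0 ∧ IsSquare (2 + a))), a)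
      = (-1 : F) ^ (q / 8) := by
  obtain ⟨r, hr, hqr, hq8⟩ : ∃ r, Odd r ∧ (q = 4 * r + 1 ∨ q + 1 = 4 * r) ∧ q / 8 = r / 2 := by
    rcases h8 with h | h
    · exact ⟨(q + 1) / 4, ⟨q / 8, by omega⟩, .inr (by omega), by omega⟩
    · exact ⟨(q - 1) / 4, ⟨q / 8, by omega⟩, .inl (by omega), by omega⟩
  subst hq
  rw [hq8]
  exact FiniteField.prod_twoPmSquares hqr hr

/-- If `q ≡ ±3 (mod 8)`, the product of all `a ∈ F_q^×` with `2-a` and `2+a`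
both nonzero squares equals `(-1)^⌊q/8⌋`. -/
theorem prod_T22_plus (F : Type*) [Field F] [Fintype F] (q : ℕ)
    (hq : Fintype.card F = q) (hodd : Odd q) (h8 : q % 8 = 3 ∨ q % 8 = 5) :
    (∏ a ∈ Finset.univ.filter (fun a : F =>
        a ≠ 0 ∧ (2 - a ≠ 0 ∧ IsSquare (2 - a)) ∧ (2 + a ≠ 0 ∧ IsSquare (2 + a))), a)
      = (-1 : F) ^ (q / 8) :=
  prod_T22_plus_general F q hq h8
end

section
/- Let q be an odd prime power with q ≡ ±1 (mod 8), and let s ∈ F_q be a square root of 2. Then 2+s is a square in F_q if q ≡ ±1 (mod 16), and a nonsquare if q ≡ 8±1 (mod 16); moreover the same holds for 2-s. -/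
open Polynomial in
lemma frob_fixed_aux {F K : Type*} [Field F] [Fintype F] [Field K] [Algebra F K]
    (x : K) (h : x ^ Fintype.card F = x) : ∃ y : F, algebraMap F K y = x := by
  classical
  set q := Fintype.card F with hq
  have hq1 : 1 < q := Fintype.one_lt_card
  have hP : (X ^ q - X : K[X]) ≠ 0 := FiniteField.X_pow_card_sub_X_ne_zero K hq1
  have hx : x ∈ ((X ^ q - X : K[X]).roots).toFinset := by
    rw [Multiset.mem_toFinset, mem_roots hP]
    simp [IsRoot, h]
  set T : Finset K := Finset.univ.image (algebraMap F K) with hT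
  have hTcard : T.card = q := by
    rw [hT, Finset.card_image_of_injective _ (algebraMap F K).injective, Finset.card_univ]
  have hsub : T ⊆ ((X ^ q - X : K[X]).roots).toFinset := by
    intro y hy
    rw [hT, Finset.mem_image] at hy
    obtain ⟨f, -, rfl⟩ := hy
    rw [Multiset.mem_toFinset, mem_roots hP]
    simp only [IsRoot, eval_sub, eval_pow, eval_X]
    rw [← map_pow, FiniteField.pow_card, sub_self]
  have hcard2 : ((X ^ q - X : K[X]).roots).toFinset.card ≤ q := by
    calc ((X ^ q - X : K[X]).roots).toFinset.card ≤ ((X ^ q - X : K[X]).roots).card :=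
          Multiset.toFinset_card_le _
      _ ≤ (X ^ q - X : K[X]).natDegree := (X ^ q - X : K[X]).card_roots' 
      _ = q := FiniteField.X_pow_card_sub_X_natDegree_eq K hq1
  have heq : T = ((X ^ q - X : K[X]).roots).toFinset :=
    Finset.eq_of_subset_of_card_le hsub (hTcard ▸ hcard2)
  rw [← heq, hT, Finset.mem_image] at hx
  obtain ⟨y, -, hy⟩ := hx
  exact ⟨y, hy⟩

/-- If `q ≡ ±1 (mod 8)` and `s` is a square root of `2` in `F_q`, then `2+s` and `2-s`
are squares when `q ≡ ±1 (mod 16)` and nonsquares when `q ≡ 8±1 (mod 16)`. -/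
theorem two_plus_sqrt_two_square (F : Type*) [Field F] [Fintype F] (q : ℕ)
    (hq : Fintype.card F = q) (hodd : Odd q) (h8 : q % 8 = 1 ∨ q % 8 = 7)
    (s : F) (hs : s ^ 2 = 2) :
    ((q % 16 = 1 ∨ q % 16 = 15) → IsSquare (2 + s) ∧ IsSquare (2 - s)) ∧
    ((q % 16 = 7 ∨ q % 16 = 9) → ¬ IsSquare (2 + s) ∧ ¬ IsSquare (2 - s)) := by
  obtain ⟨n, hp, hcard⟩ := FiniteField.card F (ringChar F)
  haveI : CharP F (ringChar F) := ringChar.charP F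
  haveI hpfact : Fact (Nat.Prime (ringChar F)) := ⟨hp⟩
  have hp2 : ringChar F ≠ 2 := by
    intro h
    have h2 := hodd
    rw [← hq, hcard, h] at h2
    exact (Nat.not_odd_iff_even.mpr (Nat.even_pow.mpr ⟨even_two, n.pos.ne'⟩)) h2
  have h2F : (2 : F) ≠ 0 := Ring.two_ne_zero hp2
  have hprod : (2 + s) * (2 - s) = 2 := by linear_combination -hs
  have hps : (2 + s) ≠ 0 := fun h => h2F (by rw [← hprod, h, zero_mul])
  have hms : (2 - s) ≠ 0 := fun h => h2F (by rw [← hprod, h, mul_zero])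
  -- squareness of 2+s and 2-s are equivalent
  have hequiv : IsSquare (2 + s) ↔ IsSquare (2 - s) := by
    constructor
    · rintro ⟨y, hy⟩
      have hy0 : y ≠ 0 := fun h => hps (by rw [hy, h, mul_zero])
      refine ⟨s * y⁻¹, ?_⟩
      field_simp
      linear_combination (s - 2) * hy - 2 * hs
    · rintro ⟨y, hy⟩
      have hy0 : y ≠ 0 := fun h => hms (by rw [hy, h, mul_zero])
      refine ⟨s * y⁻¹, ?_⟩
      field_simp
      linear_combination (-2 - s) * hy - 2 * hs
  -- set up the algebraic closure
  set K := AlgebraicClosure F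
  set i := algebraMap F K with hi
  have hinj : Function.Injective i := i.injective
  haveI : CharP K (ringChar F) := charP_of_injective_algebraMap hinj (ringChar F)
  haveI : ExpChar K (ringChar F) := ExpChar.prime hp
  have h2K : (2 : K) ≠ 0 := Ring.two_ne_zero (by rwa [ringChar.eq K (ringChar F)])
  haveI : NeZero ((16 : ℕ) : K) := ⟨by
    push_cast
    intro h
    have h4 : (2 : K) ^ 4 = 0 := by rw [← h]; norm_num
    exact h2K (pow_eq_zero_iff (by norm_num) |>.mp h4)⟩
  obtain ⟨ζ, hζ⟩ := HasEnoughRootsOfUnity.exists_primitiveRoot K 16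
  have hζ16 : ζ ^ 16 = 1 := hζ.pow_eq_one
  have hζ8 : ζ ^ 8 = -1 := by
    have hsq : ζ ^ 8 * ζ ^ 8 = 1 := by rw [← pow_add]; exact hζ16
    rcases mul_self_eq_one_iff.mp hsq with h1 | h1
    · exact absurd h1 (hζ.pow_ne_one_of_pos_of_lt (by norm_num) (by norm_num))
    · exact h1
  have hsK : (i s) ^ 2 = 2 := by rw [← map_pow, hs, map_ofNat]
  -- find w with w^8 = -1 and w^2 + w^14 = i s
  have hw : ∃ w : K, w ^ 8 = -1 ∧ w ^ 2 + w ^ 14 = i s := by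
    have ht2 : (ζ ^ 2 + ζ ^ 14) ^ 2 = 2 := by
      linear_combination ζ ^ 4 * hζ8 + (ζ ^ 12 + 2) * hζ16
    have hfac : (ζ ^ 2 + ζ ^ 14 - i s) * (ζ ^ 2 + ζ ^ 14 + i s) = 0 := by
      linear_combination ht2 - hsK
    rcases mul_eq_zero.mp hfac with h | h
    · exact ⟨ζ, hζ8, by linear_combination h⟩
    · exact ⟨ζ ^ 3, by linear_combination hζ8 + ζ ^ 8 * hζ16,
        by linear_combination -h + (ζ ^ 10 + ζ ^ 26) * hζ16 + (ζ ^ 6 + ζ ^ 2) * hζ8⟩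
  obtain ⟨w, hw8, hwsum⟩ := hw
  have hw16 : w ^ 16 = 1 := by linear_combination (w ^ 8 - 1) * hw8
  set x := w + w ^ 15 with hxdef
  have hx2 : x ^ 2 = i (2 + s) := by
    rw [map_add, map_ofNat]
    linear_combination hwsum + (w ^ 14 + 2) * hw16
  have hx0 : x ≠ 0 := by
    intro h
    apply hps
    apply hinj
    rw [map_zero, ← hx2, h]
    ring
  -- Frobenius action on x
  have hqpn : q = ringChar F ^ (n : ℕ) := by rw [← hq, hcard]
  have hxq : x ^ q = w ^ q + w ^ (15 * q) := by
    rw [hxdef, hqpn, add_pow_char_pow, ← hqpn, ← pow_mul, mul_comm 15 q]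
  have hpow : ∀ m : ℕ, w ^ m = w ^ (m % 16) := by
    intro m
    conv_lhs => rw [← Nat.div_add_mod m 16]
    rw [pow_add, pow_mul, hw16, one_pow, one_mul]
  -- key dichotomy
  have key1 : (q % 16 = 1 ∨ q % 16 = 15) → IsSquare (2 + s) := by
    intro hr
    have hfix : x ^ q = x := by
      rw [hxq, hpow q, hpow (15 * q)]
      rcases hr with hr | hr
      · rw [hr, show 15 * q % 16 = 15 by omega, hxdef]
        ring
      · rw [hr, show 15 * q % 16 = 1 by omega, hxdef]
        ring
    rw [← hq] at hfix
    obtain ⟨y, hy⟩ := frob_fixed_aux x hfix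
    refine ⟨y, ?_⟩
    apply hinj
    rw [map_mul, hy, ← sq, hx2]
  have key2 : (q % 16 = 7 ∨ q % 16 = 9) → ¬ IsSquare (2 + s) := by
    intro hr ⟨y, hy⟩
    have hneg : x ^ q = -x := by
      rw [hxq, hpow q, hpow (15 * q)]
      rcases hr with hr | hr
      · rw [hr, show 15 * q % 16 = 9 by omega]
        linear_combination (w + w ^ 7) * hw8
      · rw [hr, show 15 * q % 16 = 7 by omega]
        linear_combination (w + w ^ 7) * hw8
    have hfac : (x - i y) * (x + i y) = 0 := by
      have : (i y) ^ 2 = i (2 + s) := by rw [← map_pow, sq, ← hy]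
      linear_combination hx2 - this
    have hyq : (i y) ^ q = i y := by rw [← map_pow, ← hq, FiniteField.pow_card]
    have hfixed : x ^ q = x := by
      rcases mul_eq_zero.mp hfac with h | h
      · rw [sub_eq_zero] at h
        rw [h, hyq, ← h]
      · have h' : x = -(i y) := by linear_combination h
        rw [h', Odd.neg_pow hodd, hyq]
    have : (2 : K) * x = 0 := by linear_combination hneg - hfixed
    rcases mul_eq_zero.mp this with h | h
    · exact h2K h
    · exact hx0 h
  refine ⟨fun hr => ⟨key1 hr, hequiv.mp (key1 hr)⟩,
    fun hr => ⟨key2 hr, fun h2 => key2 hr (hequiv.mpr h2)⟩⟩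
end
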